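/- arXiv:2501.00207 — 6 statements merged into one kernel-verified Lean document; each statement's English description precedes it below -/
import Mathlib

section
/- There do not exist seven points q_1, c_1, q_2, q_3, c_2, q_4, p_i in convex position in the plane (appearing in this cyclic order) with |c_1 p_i| ≤ 1, |c_2 p_i| ≤ 1, |c_1 q_1| > 1, |c_1 q_2| > 1, |c_2 q_3| > 1, and |c_2 q_4| > 1. -/
set_option maxHeartbeats 1000000

/-- `ccw a b c` means the triple `(a, b, c)` is in strictly counterclockwise
(positive) orientation in the plane. -/
def ccw (a b c : EuclideanSpace ℝ (Fin 2)) : Prop :=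
  0 < (b 0 - a 0) * (c 1 - a 1) - (b 1 - a 1) * (c 0 - a 0)

lemma dist_sq_eq' (x y : EuclideanSpace ℝ (Fin 2)) :
    dist x y ^ 2 = (x 0 - y 0) ^ 2 + (x 1 - y 1) ^ 2 := by
  rw [EuclideanSpace.dist_eq, Real.sq_sqrt (by positivity)]
  simp [Fin.sum_univ_two, Real.dist_eq, sq_abs]

/-- Pure algebra: if `e` is short compared to both parts of the chord, the inner
product of `e - s•u` and `e + (1-s)•u` is negative (angle at `p` exceeds 90°). -/
lemma lemC' (u0 u1 e0 e1 s : ℝ) (hs0 : 0 < s) (hs1 : s < 1)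
    (hW : 0 < u0 ^ 2 + u1 ^ 2)
    (hEs : e0 ^ 2 + e1 ^ 2 < s ^ 2 * (u0 ^ 2 + u1 ^ 2))
    (hEs2 : e0 ^ 2 + e1 ^ 2 < (1 - s) ^ 2 * (u0 ^ 2 + u1 ^ 2)) :
    (e0 - s * u0) * (e0 + (1 - s) * u0) + (e1 - s * u1) * (e1 + (1 - s) * u1) < 0 := by
  have hP2 : (u0 * e0 + u1 * e1) ^ 2 ≤ (u0 ^ 2 + u1 ^ 2) * (e0 ^ 2 + e1 ^ 2) := by
    nlinarith [sq_nonneg (u0 * e1 - u1 * e0)]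
  have hPlt : u0 * e0 + u1 * e1 < s * (u0 ^ 2 + u1 ^ 2) := by
    nlinarith [hP2, hEs, mul_pos hs0 hW, mul_lt_mul_of_pos_left hEs hW]
  have hPgt : -((1 - s) * (u0 ^ 2 + u1 ^ 2)) < u0 * e0 + u1 * e1 := by
    nlinarith [hP2, hEs2, mul_pos (show (0:ℝ) < 1 - s by linarith) hW,
      mul_lt_mul_of_pos_left hEs2 hW]
  rcases le_or_gt s (1/2) with hhalf | hhalf
  · nlinarith [hEs, mul_nonneg (show (0:ℝ) ≤ 1 - 2 * s by linarith)
      (show (0:ℝ) ≤ s * (u0 ^ 2 + u1 ^ 2) - (u0 * e0 + u1 * e1) by linarith)]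
  · nlinarith [hEs2, mul_nonneg (show (0:ℝ) ≤ 2 * s - 1 by linarith)
      (show (0:ℝ) ≤ (u0 * e0 + u1 * e1) + (1 - s) * (u0 ^ 2 + u1 ^ 2) by linarith)]

/-- Key geometric lemma: if `q1, c, q2, p` are in convex position (ccw) with
`|cp| ≤ 1 < |cq1|, |cq2|`, then the angle `q1 p q2` is obtuse. -/
lemma lemA' (q1 c q2 p : EuclideanSpace ℝ (Fin 2))
    (h1 : ccw q1 c q2) (h2 : ccw q1 c p) (h3 : ccw c q2 p) (h4 : ccw q1 q2 p)
    (hcp : dist c p ≤ 1) (hq1 : dist c q1 > 1) (hq2 : dist c q2 > 1) :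
    (q1 0 - p 0) * (q2 0 - p 0) + (q1 1 - p 1) * (q2 1 - p 1) < 0 := by
  unfold ccw at h1 h2 h3 h4
  have hgc : (q2 0 - q1 0) * (c 1 - q1 1) - (q2 1 - q1 1) * (c 0 - q1 0) < 0 := by
    linarith [h1]
  have hG : 0 < ((q2 0 - q1 0) * (p 1 - q1 1) - (q2 1 - q1 1) * (p 0 - q1 0))
      - ((q2 0 - q1 0) * (c 1 - q1 1) - (q2 1 - q1 1) * (c 0 - q1 0)) := by linarith
  have hW : 0 < (q2 0 - q1 0) ^ 2 + (q2 1 - q1 1) ^ 2 := by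
    rcases eq_or_ne (q2 0 - q1 0) 0 with hz0 | hz0
    · rcases eq_or_ne (q2 1 - q1 1) 0 with hz1 | hz1
      · rw [hz0, hz1] at h4; simp at h4
      · positivity
    · positivity
  obtain ⟨t, ht_def⟩ : ∃ t : ℝ, t =
      ((q2 0 - q1 0) * (p 1 - q1 1) - (q2 1 - q1 1) * (p 0 - q1 0)) /
      (((q2 0 - q1 0) * (p 1 - q1 1) - (q2 1 - q1 1) * (p 0 - q1 0))
      - ((q2 0 - q1 0) * (c 1 - q1 1) - (q2 1 - q1 1) * (c 0 - q1 0))) := ⟨_, rfl⟩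
  have ht0 : 0 < t := by rw [ht_def]; exact div_pos h4 hG
  have ht1 : t < 1 := by rw [ht_def]; exact (div_lt_one hG).mpr (by linarith)
  obtain ⟨x, hx_def⟩ : ∃ x : EuclideanSpace ℝ (Fin 2), x = p + t • (c - p) := ⟨_, rfl⟩
  have hx0 : x 0 = p 0 + t * (c 0 - p 0) := by
    simp [hx_def, PiLp.add_apply, PiLp.smul_apply, PiLp.sub_apply, smul_eq_mul]
  have hx1 : x 1 = p 1 + t * (c 1 - p 1) := by
    simp [hx_def, PiLp.add_apply, PiLp.smul_apply, PiLp.sub_apply, smul_eq_mul]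
  -- x is on the line q1 q2
  have hgx : (q2 0 - q1 0) * (x 1 - q1 1) - (q2 1 - q1 1) * (x 0 - q1 0) = 0 := by
    have expand : (q2 0 - q1 0) * (x 1 - q1 1) - (q2 1 - q1 1) * (x 0 - q1 0)
        = ((q2 0 - q1 0) * (p 1 - q1 1) - (q2 1 - q1 1) * (p 0 - q1 0))
        - t * (((q2 0 - q1 0) * (p 1 - q1 1) - (q2 1 - q1 1) * (p 0 - q1 0))
          - ((q2 0 - q1 0) * (c 1 - q1 1) - (q2 1 - q1 1) * (c 0 - q1 0))) := by
      rw [hx0, hx1]; ring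
    rw [expand, ht_def, div_mul_cancel₀ _ hG.ne', sub_self]
  clear ht_def
  obtain ⟨s, hs_def⟩ : ∃ s : ℝ, s =
      ((x 0 - q1 0) * (q2 0 - q1 0) + (x 1 - q1 1) * (q2 1 - q1 1)) /
      ((q2 0 - q1 0) ^ 2 + (q2 1 - q1 1) ^ 2) := ⟨_, rfl⟩
  have hx0q : x 0 - q1 0 = s * (q2 0 - q1 0) := by
    rw [hs_def, div_mul_eq_mul_div, eq_div_iff hW.ne']
    linear_combination (-(q2 1 - q1 1)) * hgx
  have hx1q : x 1 - q1 1 = s * (q2 1 - q1 1) := by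
    rw [hs_def, div_mul_eq_mul_div, eq_div_iff hW.ne']
    linear_combination (q2 0 - q1 0) * hgx
  clear hs_def hgx
  have e0 : p 0 + t * (c 0 - p 0) - q1 0 = s * (q2 0 - q1 0) := by rw [← hx0]; exact hx0q
  have e1 : p 1 + t * (c 1 - p 1) - q1 1 = s * (q2 1 - q1 1) := by rw [← hx1]; exact hx1q
  have key1 : s * ((c 0 - q1 0) * (q2 1 - q1 1) - (c 1 - q1 1) * (q2 0 - q1 0))
      = (1 - t) * ((c 0 - q1 0) * (p 1 - q1 1) - (c 1 - q1 1) * (p 0 - q1 0)) := by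
    linear_combination (c 1 - q1 1) * e0 - (c 0 - q1 0) * e1
  have key2 : (1 - s) * ((c 0 - q1 0) * (q2 1 - q1 1) - (c 1 - q1 1) * (q2 0 - q1 0))
      = (1 - t) * ((q2 0 - c 0) * (p 1 - c 1) - (q2 1 - c 1) * (p 0 - c 0)) := by
    linear_combination (q2 1 - c 1) * e0 - (q2 0 - c 0) * e1
  clear e0 e1
  have hs0 : 0 < s := by
    have hm := mul_pos (show (0:ℝ) < 1 - t by linarith) h2
    rw [← key1] at hm
    rcases mul_pos_iff.mp hm with ⟨h, _⟩ | ⟨_, h⟩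
    · exact h
    · linarith [h1]
  have hs1 : s < 1 := by
    have hm := mul_pos (show (0:ℝ) < 1 - t by linarith) h3
    rw [← key2] at hm
    rcases mul_pos_iff.mp hm with ⟨h, _⟩ | ⟨_, h⟩
    · linarith
    · linarith [h1]
  clear key1 key2
  -- metric facts
  have hxp : dist x p = t * dist c p := by
    have hv : x - p = t • (c - p) := by rw [hx_def]; module
    rw [dist_eq_norm, hv, norm_smul, Real.norm_eq_abs, abs_of_pos ht0, dist_eq_norm]
  have hxc : dist x c = (1 - t) * dist c p := by
    have hv : x - c = (1 - t) • (p - c) := by rw [hx_def]; module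
    rw [dist_eq_norm, hv, norm_smul, Real.norm_eq_abs, abs_of_pos (by linarith : (0:ℝ) < 1 - t),
      dist_eq_norm, norm_sub_rev]
  have h5 : dist x p < dist x q1 := by
    have tri : dist c q1 ≤ dist c x + dist x q1 := dist_triangle c x q1
    rw [dist_comm c x] at tri
    linarith only [hxp, hxc, hcp, hq1, tri, ht0, ht1]
  have h6 : dist x p < dist x q2 := by
    have tri : dist c q2 ≤ dist c x + dist x q2 := dist_triangle c x q2
    rw [dist_comm c x] at tri
    linarith only [hxp, hxc, hcp, hq2, tri, ht0, ht1]
  have hsq1 : dist x p ^ 2 < dist x q1 ^ 2 := by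
    have h0 : (0:ℝ) ≤ dist x p := dist_nonneg
    nlinarith [h5, h0]
  have hsq2 : dist x p ^ 2 < dist x q2 ^ 2 := by
    have h0 : (0:ℝ) ≤ dist x p := dist_nonneg
    nlinarith [h6, h0]
  rw [dist_sq_eq' x p, dist_sq_eq' x q1] at hsq1
  rw [dist_sq_eq' x p, dist_sq_eq' x q2] at hsq2
  have hA1 : (x 0 - q1 0) ^ 2 + (x 1 - q1 1) ^ 2
      = s ^ 2 * ((q2 0 - q1 0) ^ 2 + (q2 1 - q1 1) ^ 2) := by
    rw [hx0q, hx1q]; ring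
  have hA2 : (x 0 - q2 0) ^ 2 + (x 1 - q2 1) ^ 2
      = (1 - s) ^ 2 * ((q2 0 - q1 0) ^ 2 + (q2 1 - q1 1) ^ 2) := by
    have f0 : x 0 - q2 0 = (s - 1) * (q2 0 - q1 0) := by linarith only [hx0q]
    have f1 : x 1 - q2 1 = (s - 1) * (q2 1 - q1 1) := by linarith only [hx1q]
    rw [f0, f1]; ring
  have hEs : (x 0 - p 0) ^ 2 + (x 1 - p 1) ^ 2
      < s ^ 2 * ((q2 0 - q1 0) ^ 2 + (q2 1 - q1 1) ^ 2) := by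
    rw [← hA1]; exact hsq1
  have hEs2 : (x 0 - p 0) ^ 2 + (x 1 - p 1) ^ 2
      < (1 - s) ^ 2 * ((q2 0 - q1 0) ^ 2 + (q2 1 - q1 1) ^ 2) := by
    rw [← hA2]; exact hsq2
  -- final computation
  have hq1p0 : q1 0 - p 0 = (x 0 - p 0) - s * (q2 0 - q1 0) := by linarith only [hx0q]
  have hq1p1 : q1 1 - p 1 = (x 1 - p 1) - s * (q2 1 - q1 1) := by linarith only [hx1q]
  have hq2p0 : q2 0 - p 0 = (x 0 - p 0) + (1 - s) * (q2 0 - q1 0) := by linarith only [hx0q]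
  have hq2p1 : q2 1 - p 1 = (x 1 - p 1) + (1 - s) * (q2 1 - q1 1) := by linarith only [hx1q]
  rw [hq1p0, hq1p1, hq2p0, hq2p1]
  exact lemC' _ _ _ _ _ hs0 hs1 hW hEs hEs2

/-- Pure algebra: two obtuse angles at the apex in ccw order cannot fit in a halfplane. -/
lemma lemB' (a1 a2 b1 b2 c1 c2 d1 d2 : ℝ)
    (hab : 0 < a1 * b2 - a2 * b1) (dab : a1 * b1 + a2 * b2 < 0)
    (hbc : 0 < b1 * c2 - b2 * c1) (hac : 0 < a1 * c2 - a2 * c1)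
    (hcd : 0 < c1 * d2 - c2 * d1) (dcd : c1 * d1 + c2 * d2 < 0)
    (had : 0 < a1 * d2 - a2 * d1) : False := by
  have hA : 0 < a1 ^ 2 + a2 ^ 2 := by
    nlinarith [mul_pos hab hab, sq_nonneg (a1 * b1 + a2 * b2),
      add_nonneg (sq_nonneg b1) (sq_nonneg b2)]
  have hC : 0 < c1 ^ 2 + c2 ^ 2 := by
    nlinarith [mul_pos hcd hcd, sq_nonneg (c1 * d1 + c2 * d2),
      add_nonneg (sq_nonneg d1) (sq_nonneg d2)]
  have hid : (a1 * b2 - a2 * b1) * (a1 * c1 + a2 * c2)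
      = (a1 * b1 + a2 * b2) * (a1 * c2 - a2 * c1)
        - (a1 ^ 2 + a2 ^ 2) * (b1 * c2 - b2 * c1) := by ring
  have hneg : (a1 * b2 - a2 * b1) * (a1 * c1 + a2 * c2) < 0 := by
    rw [hid]
    have t1 := mul_neg_of_neg_of_pos dab hac
    have t2 := mul_pos hA hbc
    linarith
  have dac : a1 * c1 + a2 * c2 < 0 := by
    by_contra h
    push_neg at h
    nlinarith [mul_nonneg hab.le h]
  have hid2 : (c1 ^ 2 + c2 ^ 2) * (a1 * d2 - a2 * d1)
      = (c1 * d1 + c2 * d2) * (a1 * c2 - a2 * c1)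
        + (c1 * d2 - c2 * d1) * (a1 * c1 + a2 * c2) := by ring
  have t3 := mul_pos hC had
  have t4 := mul_neg_of_neg_of_pos dcd hac
  have t5 := mul_neg_of_pos_of_neg hcd dac
  linarith [hid2]

/-- There do not exist seven points `q₁, c₁, q₂, q₃, c₂, q₄, p` in convex position in this
counterclockwise cyclic order (expressed by requiring every index-increasing triple of the list
to be counterclockwise) with `|c₁p| ≤ 1`, `|c₂p| ≤ 1`, `|c₁q₁| > 1`, `|c₁q₂| > 1`,
`|c₂q₃| > 1`, `|c₂q₄| > 1`.
Here `f 0 = q₁`, `f 1 = c₁`, `f 2 = q₂`, `f 3 = q₃`, `f 4 = c₂`, `f 5 = q₄`, `f 6 = p`. -/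
theorem stmt2 (f : Fin 7 → EuclideanSpace ℝ (Fin 2))
    (hconv : ∀ i j k : Fin 7, i < j → j < k → ccw (f i) (f j) (f k))
    (hc1p : dist (f 1) (f 6) ≤ 1) (hc2p : dist (f 4) (f 6) ≤ 1)
    (hc1q1 : dist (f 1) (f 0) > 1) (hc1q2 : dist (f 1) (f 2) > 1)
    (hc2q3 : dist (f 4) (f 3) > 1) (hc2q4 : dist (f 4) (f 5) > 1) :
    False := by
  have dot1 := lemA' (f 0) (f 1) (f 2) (f 6)
    (hconv 0 1 2 (by decide) (by decide)) (hconv 0 1 6 (by decide) (by decide))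
    (hconv 1 2 6 (by decide) (by decide)) (hconv 0 2 6 (by decide) (by decide))
    hc1p hc1q1 hc1q2
  have dot2 := lemA' (f 3) (f 4) (f 5) (f 6)
    (hconv 3 4 5 (by decide) (by decide)) (hconv 3 4 6 (by decide) (by decide))
    (hconv 4 5 6 (by decide) (by decide)) (hconv 3 5 6 (by decide) (by decide))
    hc2p hc2q3 hc2q4
  have c026 := hconv 0 2 6 (by decide) (by decide)
  have c236 := hconv 2 3 6 (by decide) (by decide)
  have c036 := hconv 0 3 6 (by decide) (by decide)
  have c356 := hconv 3 5 6 (by decide) (by decide)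
  have c056 := hconv 0 5 6 (by decide) (by decide)
  unfold ccw at c026 c236 c036 c356 c056
  exact lemB' (f 0 0 - f 6 0) (f 0 1 - f 6 1) (f 2 0 - f 6 0) (f 2 1 - f 6 1)
    (f 3 0 - f 6 0) (f 3 1 - f 6 1) (f 5 0 - f 6 0) (f 5 1 - f 6 1)
    (by linarith [c026]) dot1 (by linarith [c236]) (by linarith [c036])
    (by linarith [c356]) dot2 (by linarith [c056])
end

section
/- Let p_i, p_l, p_j be three points in the plane appearing in counterclockwise order on their convex hull, and let D = D(p_i, p_l, p_j) be their circumscribed disk. Let p and q be two points outside D such that p, p_l, q, p_j, p_i are in convex position in counterclockwise order (p between p_i and p_l, q between p_l and p_j along the hull). Then |pq| ≥ min{|p p_i|, |p p_l|, |p_i p_j|, |p_l p_j|, |p_l p_i|, |q p_l|, |q p_j|}. -/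
set_option maxHeartbeats 1000000

lemma sqrt_tri_aux (A B C : ℝ) (hA : A ≤ 0) :
    Real.sqrt ((A + B) ^ 2 + C ^ 2) ≤ -A + Real.sqrt (B ^ 2 + C ^ 2) := by
  set s := Real.sqrt (B ^ 2 + C ^ 2) with hs
  have hs0 : 0 ≤ s := Real.sqrt_nonneg _
  have hs2 : s ^ 2 = B ^ 2 + C ^ 2 := Real.sq_sqrt (by positivity)
  have hB : -B ≤ s := by
    rcases le_or_gt (-B) 0 with h | h
    · linarith
    · nlinarith [sq_nonneg C]
  have h1 : (A + B) ^ 2 + C ^ 2 ≤ (-A + s) ^ 2 := by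
    nlinarith [mul_nonneg (neg_nonneg.2 hA) (show (0:ℝ) ≤ B + s by linarith)]
  calc Real.sqrt ((A + B) ^ 2 + C ^ 2) ≤ Real.sqrt ((-A + s) ^ 2) := Real.sqrt_le_sqrt h1
    _ = -A + s := Real.sqrt_sq (by linarith)

lemma aux_c2 (lw ln iw inn c S : ℝ) (hln : ln < c) (hin : c < inn)
    (hSl : lw ^ 2 + ln ^ 2 = S) (hSi : iw ^ 2 + inn ^ 2 = S) : c ^ 2 < S := by
  rcases le_or_gt 0 c with h | h
  · nlinarith [sq_nonneg iw, mul_pos (sub_pos.2 hin) (show (0:ℝ) < inn + c by linarith)]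
  · nlinarith [sq_nonneg lw, mul_pos (sub_pos.2 hln) (show (0:ℝ) < -c - ln by linarith)]

lemma aux_sq_lt (X Y : ℝ) (hY : 0 ≤ Y) (hX : 0 ≤ X) (h : X < Real.sqrt Y) : X ^ 2 < Y := by
  nlinarith [mul_self_lt_mul_self hX h, Real.sq_sqrt hY]

lemma aux_l8 (x m B : ℝ) (h : (x + m) ^ 2 < B) (hx : m < x) (hm : 0 < m) : 4 * m ^ 2 < B := by
  nlinarith [mul_pos (show (0:ℝ) < x - m by linarith) (show (0:ℝ) < x + 3 * m by linarith)]

lemma aux_key (m lw c ln S : ℝ) (h1 : 4 * m ^ 2 < (-m - lw) ^ 2 + (c - ln) ^ 2)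
    (h2 : 4 * m ^ 2 < (lw - m) ^ 2 + (c - ln) ^ 2)
    (hSl : lw ^ 2 + ln ^ 2 = S) (hm2 : m ^ 2 = S - c ^ 2) :
    0 < 2 * c ^ 2 - c * ln - S := by nlinarith

lemma aux_cpos (c ln S : ℝ) (hkey : 0 < 2 * c ^ 2 - c * ln - S) (hc2 : c ^ 2 < S)
    (hln : ln < c) : 0 < c := by
  by_contra hcon
  push_neg at hcon
  nlinarith [mul_nonneg (neg_nonneg.2 hcon) (sub_nonneg.2 hln.le)]

lemma aux_cap (iw inn jw jn c S : ℝ) (hSi : iw ^ 2 + inn ^ 2 = S) (hSj : jw ^ 2 + jn ^ 2 = S)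
    (hin : c < inn) (hjn : c < jn) (hc0 : 0 < c) :
    (iw - jw) ^ 2 + (inn - jn) ^ 2 ≤ 4 * (S - c ^ 2) := by
  nlinarith [sq_nonneg (iw + jw),
    mul_pos (show (0:ℝ) < inn + jn - 2 * c by linarith) (show (0:ℝ) < inn + jn + 2 * c by linarith)]

lemma aux_fin (A pw qw m : ℝ) (h4 : A ≤ 4 * m ^ 2) (hpw : pw < -m) (hqw : m < qw)
    (hm0 : 0 < m) : A ≤ (qw - pw) ^ 2 := by
  nlinarith [mul_pos (show (0:ℝ) < qw - pw - 2 * m by linarith)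
    (show (0:ℝ) < qw - pw + 2 * m by linarith)]

lemma aux_sqzero (a b : ℝ) (h : a ^ 2 + b ^ 2 ≤ 0) : a = 0 := by
  nlinarith [sq_nonneg a, sq_nonneg b]

lemma frame_core (pw qw lw ln iw inn jw jn zw c S : ℝ)
    (hSl : lw ^ 2 + ln ^ 2 = S) (hSi : iw ^ 2 + inn ^ 2 = S) (hSj : jw ^ 2 + jn ^ 2 = S)
    (hpo : S < pw ^ 2 + c ^ 2) (hqo : S < qw ^ 2 + c ^ 2)
    (hz : zw ^ 2 + c ^ 2 ≤ S) (hzp : pw ≤ zw) (hzq : zw ≤ qw)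
    (hln : ln < c) (hin : c < inn) (hjn : c < jn)
    (hpl : (qw - pw) ^ 2 < (pw - lw) ^ 2 + (c - ln) ^ 2)
    (hql : (qw - pw) ^ 2 < (qw - lw) ^ 2 + (c - ln) ^ 2) :
    (iw - jw) ^ 2 + (inn - jn) ^ 2 ≤ (qw - pw) ^ 2 := by
  have hc2 : c ^ 2 < S := aux_c2 lw ln iw inn c S hln hin hSl hSi
  have hmm : 0 < S - c ^ 2 := by linarith
  set m := Real.sqrt (S - c ^ 2) with hm
  have hm2 : m ^ 2 = S - c ^ 2 := Real.sq_sqrt hmm.le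
  have hm0 : 0 < m := Real.sqrt_pos.2 hmm
  have hzw2 : zw ^ 2 ≤ m ^ 2 := by linarith only [hz, hm2]
  have habs : |zw| ≤ m := by
    rw [← Real.sqrt_sq_eq_abs, ← Real.sqrt_sq hm0.le]
    exact Real.sqrt_le_sqrt hzw2
  obtain ⟨hzwl, hzwu⟩ := abs_le.1 habs
  have hpw : pw < -m := by
    by_contra hcon
    push_neg at hcon
    have h1 : pw ^ 2 ≤ m ^ 2 := sq_le_sq' hcon (by linarith only [hzp, hzwu])
    linarith only [h1, hpo, hm2]
  have hqw : m < qw := by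
    by_contra hcon
    push_neg at hcon
    have h1 : qw ^ 2 ≤ m ^ 2 := sq_le_sq' (by linarith only [hzq, hzwl]) hcon
    linarith only [h1, hqo, hm2]
  have hw0 : 0 < qw - pw := by linarith only [hpw, hqw, hm0]
  have t1 := sqrt_tri_aux (pw + m) (-m - lw) (c - ln) (by linarith only [hpw])
  rw [show pw + m + (-m - lw) = pw - lw by ring] at t1
  have hpls : qw - pw < Real.sqrt ((pw - lw) ^ 2 + (c - ln) ^ 2) := by
    have h := Real.sqrt_lt_sqrt (sq_nonneg (qw - pw)) hpl
    rwa [Real.sqrt_sq hw0.le] at h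
  have hsl : qw + m < Real.sqrt ((-m - lw) ^ 2 + (c - ln) ^ 2) := by
    linarith only [t1, hpls]
  have hsl2 : (qw + m) ^ 2 < (-m - lw) ^ 2 + (c - ln) ^ 2 :=
    aux_sq_lt _ _ (by positivity) (by linarith only [hqw, hm0]) hsl
  have hleft : 4 * m ^ 2 < (-m - lw) ^ 2 + (c - ln) ^ 2 := aux_l8 qw m _ hsl2 hqw hm0
  have t2 := sqrt_tri_aux (m - qw) (lw - m) (c - ln) (by linarith only [hqw])
  rw [show m - qw + (lw - m) = lw - qw by ring] at t2
  have hqls : qw - pw < Real.sqrt ((lw - qw) ^ 2 + (c - ln) ^ 2) := by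
    have h := Real.sqrt_lt_sqrt (sq_nonneg (qw - pw))
      (show (qw - pw) ^ 2 < (lw - qw) ^ 2 + (c - ln) ^ 2 by linarith only [hql])
    rwa [Real.sqrt_sq hw0.le] at h
  have hsr : -pw + m < Real.sqrt ((lw - m) ^ 2 + (c - ln) ^ 2) := by
    linarith only [t2, hqls]
  have hsr2 : (-pw + m) ^ 2 < (lw - m) ^ 2 + (c - ln) ^ 2 :=
    aux_sq_lt _ _ (by positivity) (by linarith only [hpw, hm0]) hsr
  have hright : 4 * m ^ 2 < (lw - m) ^ 2 + (c - ln) ^ 2 := aux_l8 (-pw) m _ hsr2 (by linarith only [hpw]) hm0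
  have hkey := aux_key m lw c ln S hleft hright hSl hm2
  have hc0 : 0 < c := aux_cpos c ln S hkey hc2 hln
  have h4 := aux_cap iw inn jw jn c S hSi hSj hin hjn hc0
  exact aux_fin _ pw qw m (by linarith only [h4, hm2]) hpw hqw hm0

lemma bridge (p1 p2 l1 l2 q1 q2 j1 j2 i1 i2 o1 o2 R : ℝ)
    (hcl : (o1 - l1) ^ 2 + (o2 - l2) ^ 2 = R ^ 2)
    (hcj : (o1 - j1) ^ 2 + (o2 - j2) ^ 2 = R ^ 2)
    (hci : (o1 - i1) ^ 2 + (o2 - i2) ^ 2 = R ^ 2)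
    (hpo : R ^ 2 < (p1 - o1) ^ 2 + (p2 - o2) ^ 2)
    (hqo : R ^ 2 < (q1 - o1) ^ 2 + (q2 - o2) ^ 2)
    (c012 : 0 < (l1 - p1) * (q2 - p2) - (l2 - p2) * (q1 - p1))
    (c013 : 0 < (l1 - p1) * (j2 - p2) - (l2 - p2) * (j1 - p1))
    (c023 : 0 < (q1 - p1) * (j2 - p2) - (q2 - p2) * (j1 - p1))
    (c024 : 0 < (q1 - p1) * (i2 - p2) - (q2 - p2) * (i1 - p1))
    (c123 : 0 < (q1 - l1) * (j2 - l2) - (q2 - l2) * (j1 - l1))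
    (hpl : (p1 - q1) ^ 2 + (p2 - q2) ^ 2 < (p1 - l1) ^ 2 + (p2 - l2) ^ 2)
    (hql : (p1 - q1) ^ 2 + (p2 - q2) ^ 2 < (q1 - l1) ^ 2 + (q2 - l2) ^ 2) :
    (i1 - j1) ^ 2 + (i2 - j2) ^ 2 ≤ (p1 - q1) ^ 2 + (p2 - q2) ^ 2 := by
  have hw2 : 0 < (q1 - p1) ^ 2 + (q2 - p2) ^ 2 := by
    rcases lt_or_eq_of_le (show (0:ℝ) ≤ (q1 - p1) ^ 2 + (q2 - p2) ^ 2 by positivity) with h | h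
    · exact h
    · exfalso
      have h1 : q1 - p1 = 0 := aux_sqzero (q1 - p1) (q2 - p2) (by linarith only [h])
      have h2 : q2 - p2 = 0 := aux_sqzero (q2 - p2) (q1 - p1) (by linarith only [h])
      have h3 : (l1 - p1) * (q2 - p2) - (l2 - p2) * (q1 - p1) = 0 := by rw [h1, h2]; ring
      linarith only [h3, c012]
  have hK : 0 < ((l1 - p1) * (j2 - p2) - (l2 - p2) * (j1 - p1)) +
      ((q1 - l1) * (j2 - l2) - (q2 - l2) * (j1 - l1)) := by linarith only [c013, c123]
  set T : ℝ := ((l1 - p1) * (j2 - p2) - (l2 - p2) * (j1 - p1)) /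
      (((l1 - p1) * (j2 - p2) - (l2 - p2) * (j1 - p1)) +
        ((q1 - l1) * (j2 - l2) - (q2 - l2) * (j1 - l1))) with hT
  set G : ℝ := ((l1 - p1) * (q2 - p2) - (l2 - p2) * (q1 - p1)) /
      (((l1 - p1) * (j2 - p2) - (l2 - p2) * (j1 - p1)) +
        ((q1 - l1) * (j2 - l2) - (q2 - l2) * (j1 - l1))) with hG
  have hT0 : 0 ≤ T := by rw [hT]; exact div_nonneg c013.le hK.le
  have hT1 : T ≤ 1 := by rw [hT, div_le_one hK]; linarith only [c123]
  have hG0 : 0 ≤ G := by rw [hG]; exact div_nonneg c012.le hK.le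
  have hG1 : G ≤ 1 := by rw [hG, div_le_one hK]; linarith only [c023]
  set z1 : ℝ := l1 + G * (j1 - l1) with hz1
  set z2 : ℝ := l2 + G * (j2 - l2) with hz2
  have hdot : (l1 - o1) * (j1 - o1) + (l2 - o2) * (j2 - o2) ≤ R ^ 2 := by
    linarith only [sq_nonneg (l1 - j1), sq_nonneg (l2 - j2), hcl, hcj]
  have hzdisk : (z1 - o1) ^ 2 + (z2 - o2) ^ 2 ≤ R ^ 2 := by
    have e1 : (1 - G) ^ 2 * ((o1 - l1) ^ 2 + (o2 - l2) ^ 2) = (1 - G) ^ 2 * R ^ 2 := by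
      rw [hcl]
    have e2 : G ^ 2 * ((o1 - j1) ^ 2 + (o2 - j2) ^ 2) = G ^ 2 * R ^ 2 := by rw [hcj]
    have P := mul_nonneg (mul_nonneg hG0 (show (0:ℝ) ≤ 1 - G by linarith only [hG1]))
      (sub_nonneg.2 hdot)
    rw [hz1, hz2]
    linarith only [e1, e2, P]
  have hzn : (z2 - p2) * (q1 - p1) - (z1 - p1) * (q2 - p2) = 0 := by
    rw [hz1, hz2, hG]
    field_simp
    ring
  have hzw : (z1 - p1) * (q1 - p1) + (z2 - p2) * (q2 - p2) =
      T * ((q1 - p1) ^ 2 + (q2 - p2) ^ 2) := by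
    rw [hz1, hz2, hG, hT]
    field_simp
    ring
  have hb1 : ((l1 - o1) * (q1 - p1) + (l2 - o2) * (q2 - p2)) ^ 2 +
      ((l2 - o2) * (q1 - p1) - (l1 - o1) * (q2 - p2)) ^ 2 =
      ((q1 - p1) ^ 2 + (q2 - p2) ^ 2) * R ^ 2 := by
    linear_combination ((q1 - p1) ^ 2 + (q2 - p2) ^ 2) * hcl
  have hb2 : ((i1 - o1) * (q1 - p1) + (i2 - o2) * (q2 - p2)) ^ 2 +
      ((i2 - o2) * (q1 - p1) - (i1 - o1) * (q2 - p2)) ^ 2 =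
      ((q1 - p1) ^ 2 + (q2 - p2) ^ 2) * R ^ 2 := by
    linear_combination ((q1 - p1) ^ 2 + (q2 - p2) ^ 2) * hci
  have hb3 : ((j1 - o1) * (q1 - p1) + (j2 - o2) * (q2 - p2)) ^ 2 +
      ((j2 - o2) * (q1 - p1) - (j1 - o1) * (q2 - p2)) ^ 2 =
      ((q1 - p1) ^ 2 + (q2 - p2) ^ 2) * R ^ 2 := by
    linear_combination ((q1 - p1) ^ 2 + (q2 - p2) ^ 2) * hcj
  have hb4 : ((q1 - p1) ^ 2 + (q2 - p2) ^ 2) * R ^ 2 <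
      ((p1 - o1) * (q1 - p1) + (p2 - o2) * (q2 - p2)) ^ 2 +
      ((p2 - o2) * (q1 - p1) - (p1 - o1) * (q2 - p2)) ^ 2 := by
    have h := mul_pos hw2 (sub_pos.2 hpo)
    linarith only [h]
  have hb5 : ((q1 - p1) ^ 2 + (q2 - p2) ^ 2) * R ^ 2 <
      ((q1 - o1) * (q1 - p1) + (q2 - o2) * (q2 - p2)) ^ 2 +
      ((p2 - o2) * (q1 - p1) - (p1 - o1) * (q2 - p2)) ^ 2 := by
    have h := mul_pos hw2 (sub_pos.2 hqo)
    linarith only [h]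
  have hb6 : (((p1 - o1) * (q1 - p1) + (p2 - o2) * (q2 - p2)) +
        T * ((q1 - p1) ^ 2 + (q2 - p2) ^ 2)) ^ 2 +
      ((p2 - o2) * (q1 - p1) - (p1 - o1) * (q2 - p2)) ^ 2 ≤
      ((q1 - p1) ^ 2 + (q2 - p2) ^ 2) * R ^ 2 := by
    have e1 : (z1 - o1) * (q1 - p1) + (z2 - o2) * (q2 - p2) =
        ((p1 - o1) * (q1 - p1) + (p2 - o2) * (q2 - p2)) +
          T * ((q1 - p1) ^ 2 + (q2 - p2) ^ 2) := by linear_combination hzw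
    have e2 : (z2 - o2) * (q1 - p1) - (z1 - o1) * (q2 - p2) =
        (p2 - o2) * (q1 - p1) - (p1 - o1) * (q2 - p2) := by linear_combination hzn
    rw [← e1, ← e2]
    have e3 : ((z1 - o1) * (q1 - p1) + (z2 - o2) * (q2 - p2)) ^ 2 +
        ((z2 - o2) * (q1 - p1) - (z1 - o1) * (q2 - p2)) ^ 2 =
        ((q1 - p1) ^ 2 + (q2 - p2) ^ 2) * ((z1 - o1) ^ 2 + (z2 - o2) ^ 2) := by ring
    rw [e3]
    exact mul_le_mul_of_nonneg_left hzdisk hw2.le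
  have hb7 : ((p1 - o1) * (q1 - p1) + (p2 - o2) * (q2 - p2)) +
      T * ((q1 - p1) ^ 2 + (q2 - p2) ^ 2) ≤
      (q1 - o1) * (q1 - p1) + (q2 - o2) * (q2 - p2) := by
    have h := mul_nonneg (sub_nonneg.2 hT1) hw2.le
    linarith only [h]
  have hb8 : ((l2 - o2) * (q1 - p1) - (l1 - o1) * (q2 - p2)) <
      ((p2 - o2) * (q1 - p1) - (p1 - o1) * (q2 - p2)) := by linarith only [c012]
  have hb9 : ((p2 - o2) * (q1 - p1) - (p1 - o1) * (q2 - p2)) <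
      ((i2 - o2) * (q1 - p1) - (i1 - o1) * (q2 - p2)) := by linarith only [c024]
  have hb10 : ((p2 - o2) * (q1 - p1) - (p1 - o1) * (q2 - p2)) <
      ((j2 - o2) * (q1 - p1) - (j1 - o1) * (q2 - p2)) := by linarith only [c023]
  have hb11 : (((q1 - o1) * (q1 - p1) + (q2 - o2) * (q2 - p2)) -
        ((p1 - o1) * (q1 - p1) + (p2 - o2) * (q2 - p2))) ^ 2 <
      (((p1 - o1) * (q1 - p1) + (p2 - o2) * (q2 - p2)) -
        ((l1 - o1) * (q1 - p1) + (l2 - o2) * (q2 - p2))) ^ 2 +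
      (((p2 - o2) * (q1 - p1) - (p1 - o1) * (q2 - p2)) -
        ((l2 - o2) * (q1 - p1) - (l1 - o1) * (q2 - p2))) ^ 2 := by
    have h := mul_lt_mul_of_pos_left hpl hw2
    linarith only [h]
  have hb12 : (((q1 - o1) * (q1 - p1) + (q2 - o2) * (q2 - p2)) -
        ((p1 - o1) * (q1 - p1) + (p2 - o2) * (q2 - p2))) ^ 2 <
      (((q1 - o1) * (q1 - p1) + (q2 - o2) * (q2 - p2)) -
        ((l1 - o1) * (q1 - p1) + (l2 - o2) * (q2 - p2))) ^ 2 +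
      (((p2 - o2) * (q1 - p1) - (p1 - o1) * (q2 - p2)) -
        ((l2 - o2) * (q1 - p1) - (l1 - o1) * (q2 - p2))) ^ 2 := by
    have h := mul_lt_mul_of_pos_left hql hw2
    linarith only [h]
  have main := frame_core
    ((p1 - o1) * (q1 - p1) + (p2 - o2) * (q2 - p2))
    ((q1 - o1) * (q1 - p1) + (q2 - o2) * (q2 - p2))
    ((l1 - o1) * (q1 - p1) + (l2 - o2) * (q2 - p2))
    ((l2 - o2) * (q1 - p1) - (l1 - o1) * (q2 - p2))
    ((i1 - o1) * (q1 - p1) + (i2 - o2) * (q2 - p2))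
    ((i2 - o2) * (q1 - p1) - (i1 - o1) * (q2 - p2))
    ((j1 - o1) * (q1 - p1) + (j2 - o2) * (q2 - p2))
    ((j2 - o2) * (q1 - p1) - (j1 - o1) * (q2 - p2))
    (((p1 - o1) * (q1 - p1) + (p2 - o2) * (q2 - p2)) + T * ((q1 - p1) ^ 2 + (q2 - p2) ^ 2))
    ((p2 - o2) * (q1 - p1) - (p1 - o1) * (q2 - p2))
    (((q1 - p1) ^ 2 + (q2 - p2) ^ 2) * R ^ 2)
    hb1 hb2 hb3 hb4 hb5 hb6
    (le_add_of_nonneg_right (mul_nonneg hT0 hw2.le))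
    hb7 hb8 hb9 hb10 hb11 hb12
  have hfin : ((q1 - p1) ^ 2 + (q2 - p2) ^ 2) * ((i1 - j1) ^ 2 + (i2 - j2) ^ 2) ≤
      ((q1 - p1) ^ 2 + (q2 - p2) ^ 2) * ((p1 - q1) ^ 2 + (p2 - q2) ^ 2) := by
    linarith only [main]
  exact le_of_mul_le_mul_left hfin hw2

/-- Let `p, p_l, q, p_j, p_i` be five points in convex position in counterclockwise order
(`f 0 = p`, `f 1 = p_l`, `f 2 = q`, `f 3 = p_j`, `f 4 = p_i`), and let the circle centered
at `o` of radius `R` pass through `p_i, p_l, p_j` (the circumscribed circle of the triangle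
`p_i p_l p_j`).  If `p` and `q` lie outside the closed disk `D(p_i, p_l, p_j)`, then
`|pq| ≥ min {|p p_i|, |p p_l|, |p_i p_j|, |p_l p_j|, |p_l p_i|, |q p_l|, |q p_j|}`. -/
theorem stmt6 (f : Fin 5 → EuclideanSpace ℝ (Fin 2))
    (hconv : ∀ i j k : Fin 5, i < j → j < k → ccw (f i) (f j) (f k))
    (o : EuclideanSpace ℝ (Fin 2)) (R : ℝ)
    (hoi : dist o (f 4) = R) (hol : dist o (f 1) = R) (hoj : dist o (f 3) = R)
    (hp : f 0 ∉ Metric.closedBall o R) (hq : f 2 ∉ Metric.closedBall o R) :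
    dist (f 0) (f 2) ≥
      min (dist (f 0) (f 4))
        (min (dist (f 0) (f 1))
          (min (dist (f 4) (f 3))
            (min (dist (f 1) (f 3))
              (min (dist (f 1) (f 4))
                (min (dist (f 2) (f 1)) (dist (f 2) (f 3))))))) := by
  have hd2 : ∀ a b : EuclideanSpace ℝ (Fin 2),
      dist a b ^ 2 = (a 0 - b 0) ^ 2 + (a 1 - b 1) ^ 2 := by
    intro a b
    rw [EuclideanSpace.dist_eq, Fin.sum_univ_two, Real.sq_sqrt (by positivity)]
    simp [Real.dist_eq, sq_abs]
  rw [ge_iff_le]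
  rcases le_or_gt (dist (f 0) (f 1)) (dist (f 0) (f 2)) with h1 | h1
  · exact min_le_of_right_le (min_le_of_left_le h1)
  rcases le_or_gt (dist (f 2) (f 1)) (dist (f 0) (f 2)) with h2 | h2
  · exact min_le_of_right_le (min_le_of_right_le (min_le_of_right_le (min_le_of_right_le
      (min_le_of_right_le (min_le_of_left_le h2)))))
  have hR0 : 0 ≤ R := by rw [← hoi]; exact dist_nonneg
  have hcl : (o 0 - f 1 0) ^ 2 + (o 1 - f 1 1) ^ 2 = R ^ 2 := by
    have e := hd2 o (f 1); rw [hol] at e; exact e.symm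
  have hcj : (o 0 - f 3 0) ^ 2 + (o 1 - f 3 1) ^ 2 = R ^ 2 := by
    have e := hd2 o (f 3); rw [hoj] at e; exact e.symm
  have hci : (o 0 - f 4 0) ^ 2 + (o 1 - f 4 1) ^ 2 = R ^ 2 := by
    have e := hd2 o (f 4); rw [hoi] at e; exact e.symm
  have hpo' : R < dist (f 0) o := by
    simpa [Metric.mem_closedBall, not_le] using hp
  have hqo' : R < dist (f 2) o := by
    simpa [Metric.mem_closedBall, not_le] using hq
  have hpo : R ^ 2 < (f 0 0 - o 0) ^ 2 + (f 0 1 - o 1) ^ 2 := by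
    have e := hd2 (f 0) o
    have h := mul_pos (sub_pos.2 hpo')
      (show (0:ℝ) < dist (f 0) o + R by linarith only [hpo', hR0])
    linarith only [e, h]
  have hqo : R ^ 2 < (f 2 0 - o 0) ^ 2 + (f 2 1 - o 1) ^ 2 := by
    have e := hd2 (f 2) o
    have h := mul_pos (sub_pos.2 hqo')
      (show (0:ℝ) < dist (f 2) o + R by linarith only [hqo', hR0])
    linarith only [e, h]
  have c012 : 0 < (f 1 0 - f 0 0) * (f 2 1 - f 0 1) - (f 1 1 - f 0 1) * (f 2 0 - f 0 0) :=
    hconv 0 1 2 (by decide) (by decide)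
  have c013 : 0 < (f 1 0 - f 0 0) * (f 3 1 - f 0 1) - (f 1 1 - f 0 1) * (f 3 0 - f 0 0) :=
    hconv 0 1 3 (by decide) (by decide)
  have c023 : 0 < (f 2 0 - f 0 0) * (f 3 1 - f 0 1) - (f 2 1 - f 0 1) * (f 3 0 - f 0 0) :=
    hconv 0 2 3 (by decide) (by decide)
  have c024 : 0 < (f 2 0 - f 0 0) * (f 4 1 - f 0 1) - (f 2 1 - f 0 1) * (f 4 0 - f 0 0) :=
    hconv 0 2 4 (by decide) (by decide)
  have c123 : 0 < (f 2 0 - f 1 0) * (f 3 1 - f 1 1) - (f 2 1 - f 1 1) * (f 3 0 - f 1 0) :=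
    hconv 1 2 3 (by decide) (by decide)
  have hpl : (f 0 0 - f 2 0) ^ 2 + (f 0 1 - f 2 1) ^ 2 <
      (f 0 0 - f 1 0) ^ 2 + (f 0 1 - f 1 1) ^ 2 := by
    have e1 := hd2 (f 0) (f 2); have e2 := hd2 (f 0) (f 1)
    have h := mul_pos (show (0:ℝ) < dist (f 0) (f 1) by
        linarith only [h1, dist_nonneg (x := f 0) (y := f 2)]) (sub_pos.2 h1)
    have h' := mul_nonneg (dist_nonneg (x := f 0) (y := f 2)) (sub_pos.2 h1).le
    linarith only [e1, e2, h, h']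
  have hql : (f 0 0 - f 2 0) ^ 2 + (f 0 1 - f 2 1) ^ 2 <
      (f 2 0 - f 1 0) ^ 2 + (f 2 1 - f 1 1) ^ 2 := by
    have e1 := hd2 (f 0) (f 2); have e2 := hd2 (f 2) (f 1)
    have h := mul_pos (show (0:ℝ) < dist (f 2) (f 1) by
        linarith only [h2, dist_nonneg (x := f 0) (y := f 2)]) (sub_pos.2 h2)
    have h' := mul_nonneg (dist_nonneg (x := f 0) (y := f 2)) (sub_pos.2 h2).le
    linarith only [e1, e2, h, h']
  have key := bridge (f 0 0) (f 0 1) (f 1 0) (f 1 1) (f 2 0) (f 2 1) (f 3 0) (f 3 1)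
    (f 4 0) (f 4 1) (o 0) (o 1) R hcl hcj hci hpo hqo
    (by linarith only [c012]) (by linarith only [c013]) (by linarith only [c023])
    (by linarith only [c024]) (by linarith only [c123]) hpl hql
  have hfinal : dist (f 4) (f 3) ≤ dist (f 0) (f 2) := by
    have e1 := hd2 (f 4) (f 3); have e2 := hd2 (f 0) (f 2)
    have hsq : dist (f 4) (f 3) ^ 2 ≤ dist (f 0) (f 2) ^ 2 := by
      linarith only [key, e1, e2]
    have h := Real.sqrt_le_sqrt hsq
    rwa [Real.sqrt_sq dist_nonneg, Real.sqrt_sq dist_nonneg] at h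
  exact min_le_of_right_le (min_le_of_right_le (min_le_of_left_le hfinal))
end

section
/- Let p, p_l, p_j, p_i be four points on their convex hull in counterclockwise order, with |p p_i| > 1, |p_i p_j| > 1, |p p_l| > 1, |p_l p_j| > 1, and suppose p lies outside the disk D(p_i, p_l, p_j). Then |p p_j| > 1. -/
/-- The core algebraic fact: if `i`, `l`, `j` lie on a circle of radius `r`
centered at the origin, `p` is strictly outside that circle, suitable
counterclockwise orientation conditions hold, and the angles of the
quadrilateral at `i` and at `l` are both acute (positive inner products),
then we get a contradiction. -/
private lemma stmt9core (ix iy lx ly jx jy px py r : ℝ)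
    (hi : ix^2+iy^2 = r^2) (hl : lx^2+ly^2 = r^2) (hj : jx^2+jy^2 = r^2)
    (hp : px^2+py^2 - r^2 > 0)
    (c1 : 0 < (lx-px)*(jy-py)-(ly-py)*(jx-px))
    (c3 : 0 < (jx-px)*(iy-py)-(jy-py)*(ix-px))
    (c4 : 0 < (jx-lx)*(iy-ly)-(jy-ly)*(ix-lx))
    (a1 : 0 < (px-ix)*(jx-ix)+(py-iy)*(jy-iy))
    (a2 : 0 < (px-lx)*(jx-lx)+(py-ly)*(jy-ly)) : False := by
  nlinarith [mul_pos a1 a2, mul_pos c1 c3, mul_pos hp c4, mul_pos a1 c1, mul_pos a2 c3]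

private lemma stmt9dsq (x y : EuclideanSpace ℝ (Fin 2)) :
    dist x y ^ 2 = (x 0 - y 0)^2 + (x 1 - y 1)^2 := by
  rw [EuclideanSpace.dist_eq, Real.sq_sqrt (by positivity)]
  simp [Fin.sum_univ_two, Real.dist_eq, sq_abs]

set_option maxHeartbeats 2000000 in
/-- Let `p, p_l, p_j, p_i` be four points in convex position in counterclockwise order
(`f 0 = p`, `f 1 = p_l`, `f 2 = p_j`, `f 3 = p_i`), with `|p p_i| > 1`, `|p_i p_j| > 1`,
`|p p_l| > 1`, `|p_l p_j| > 1`, and suppose `p` lies outside the closed circumscribed disk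
`D(p_i, p_l, p_j)` (centered at `o`, radius `r`, boundary through `p_i, p_l, p_j`).
Then `|p p_j| > 1`. -/
theorem stmt9 (f : Fin 4 → EuclideanSpace ℝ (Fin 2))
    (hconv : ∀ i j k : Fin 4, i < j → j < k → ccw (f i) (f j) (f k))
    (o : EuclideanSpace ℝ (Fin 2)) (r : ℝ)
    (hoi : dist o (f 3) = r) (hol : dist o (f 1) = r) (hoj : dist o (f 2) = r)
    (h1 : dist (f 0) (f 3) > 1) (h2 : dist (f 3) (f 2) > 1)
    (h3 : dist (f 0) (f 1) > 1) (h4 : dist (f 1) (f 2) > 1)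
    (hout : f 0 ∉ Metric.closedBall o r) :
    dist (f 0) (f 2) > 1 := by
  have hr : 0 < r := by
    have ht := dist_triangle (f 1) o (f 2)
    rw [dist_comm (f 1) o, hol, hoj] at ht
    linarith
  have hi : (f 3 0 - o 0)^2 + (f 3 1 - o 1)^2 = r^2 := by
    rw [← hoi, stmt9dsq o (f 3)]; ring
  have hl : (f 1 0 - o 0)^2 + (f 1 1 - o 1)^2 = r^2 := by
    rw [← hol, stmt9dsq o (f 1)]; ring
  have hj : (f 2 0 - o 0)^2 + (f 2 1 - o 1)^2 = r^2 := by
    rw [← hoj, stmt9dsq o (f 2)]; ring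
  simp only [Metric.mem_closedBall, not_le] at hout
  have hp : (f 0 0 - o 0)^2 + (f 0 1 - o 1)^2 - r^2 > 0 := by
    have e := stmt9dsq (f 0) o
    nlinarith [hout, hr]
  have c1 := hconv 0 1 2 (by decide) (by decide)
  have c3 := hconv 0 2 3 (by decide) (by decide)
  have c4 := hconv 1 2 3 (by decide) (by decide)
  unfold ccw at c1 c3 c4
  have h1c : 1 < (f 0 0 - f 3 0)^2 + (f 0 1 - f 3 1)^2 := by
    have e := stmt9dsq (f 0) (f 3); nlinarith [h1]
  have h2c : 1 < (f 3 0 - f 2 0)^2 + (f 3 1 - f 2 1)^2 := by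
    have e := stmt9dsq (f 3) (f 2); nlinarith [h2]
  have h3c : 1 < (f 0 0 - f 1 0)^2 + (f 0 1 - f 1 1)^2 := by
    have e := stmt9dsq (f 0) (f 1); nlinarith [h3]
  have h4c : 1 < (f 1 0 - f 2 0)^2 + (f 1 1 - f 2 1)^2 := by
    have e := stmt9dsq (f 1) (f 2); nlinarith [h4]
  have key : 1 < (f 0 0 - f 2 0)^2 + (f 0 1 - f 2 1)^2 := by
    rcases le_or_gt ((f 0 0 - f 3 0)*(f 2 0 - f 3 0) + (f 0 1 - f 3 1)*(f 2 1 - f 3 1)) 0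
      with hA1 | hA1
    · nlinarith [h1c, h2c, hA1]
    rcases le_or_gt ((f 0 0 - f 1 0)*(f 2 0 - f 1 0) + (f 0 1 - f 1 1)*(f 2 1 - f 1 1)) 0
      with hA2 | hA2
    · nlinarith [h3c, h4c, hA2]
    exact (stmt9core (f 3 0 - o 0) (f 3 1 - o 1) (f 1 0 - o 0) (f 1 1 - o 1)
      (f 2 0 - o 0) (f 2 1 - o 1) (f 0 0 - o 0) (f 0 1 - o 1) r hi hl hj hp
      (lt_of_lt_of_eq c1 (by ring)) (lt_of_lt_of_eq c3 (by ring))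
      (lt_of_lt_of_eq c4 (by ring)) (lt_of_lt_of_eq hA1 (by ring))
      (lt_of_lt_of_eq hA2 (by ring))).elim
  have e := stmt9dsq (f 0) (f 2)
  nlinarith [key, dist_nonneg (x := f 0) (y := f 2)]
end

section
/- Let P be a finite set of at least 3 points and r > 0. For p ∈ P and a cyclic (convex-hull) order on P, suppose there exist three points of P with pairwise distances all ≥ r. Then there exists a point p_i ∈ P such that, letting a_i be the first point counterclockwise from p_i at distance ≥ r from p_i and b_i the first point clockwise from p_i at distance ≥ r from p_i, the cyclic segment P[a_i, b_i] (from a_i counterclockwise to b_i) contains two points at distance ≥ r from each other. Conversely, if such a p_i exists then P contains three points with pairwise distances all ≥ r. -/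
/-- `cycBtw i j k`: in the cyclic order on `Fin n` (indices increasing counterclockwise,
wrapping around), `j` lies strictly between `i` and `k` when going counterclockwise
from `i` to `k`. -/
def cycBtw {n : ℕ} (i j k : Fin n) : Prop :=
  (i < j ∧ j < k) ∨ (j < k ∧ k < i) ∨ (k < i ∧ i < j)

/-- `cycMem a j b`: `j` belongs to the closed cyclic interval from `a` counterclockwise
to `b`. -/
def cycMem {n : ℕ} (a j b : Fin n) : Prop :=
  j = a ∨ j = b ∨ cycBtw a j b

section Aux

lemma seg_dist' {E : Type*} [NormedAddCommGroup E] [NormedSpace ℝ E]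
    (w y : E) (t : ℝ) (ht0 : 0 ≤ t) (ht1 : t ≤ 1) :
    dist w (w + t • (y - w)) = t * dist w y ∧
    dist (w + t • (y - w)) y = (1 - t) * dist w y := by
  constructor
  · rw [dist_eq_norm, show w - (w + t • (y - w)) = t • (w - y) by module,
      norm_smul, Real.norm_eq_abs, abs_of_nonneg ht0, ← dist_eq_norm]
  · rw [dist_eq_norm, show (w + t • (y - w)) - y = (1 - t) • (w - y) by module,
      norm_smul, Real.norm_eq_abs, abs_of_nonneg (by linarith), ← dist_eq_norm]

lemma quad_ineq' (w x y z : EuclideanSpace ℝ (Fin 2))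
    (h1 : ccw w x y) (h2 : ccw w x z) (h3 : ccw w y z) (h4 : ccw x y z) :
    dist w x + dist y z ≤ dist w y + dist x z ∧
    dist x y + dist w z ≤ dist w y + dist x z := by
  unfold ccw at h1 h2 h3 h4
  have hpos : 0 < ((x 0 - w 0) * (z 1 - w 1) - (x 1 - w 1) * (z 0 - w 0))
      + ((y 0 - x 0) * (z 1 - x 1) - (y 1 - x 1) * (z 0 - x 0)) := by linarith
  set D := ((x 0 - w 0) * (z 1 - w 1) - (x 1 - w 1) * (z 0 - w 0))
      + ((y 0 - x 0) * (z 1 - x 1) - (y 1 - x 1) * (z 0 - x 0)) with hD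
  set t := ((x 0 - w 0) * (z 1 - w 1) - (x 1 - w 1) * (z 0 - w 0)) / D with ht
  set s := ((x 0 - w 0) * (y 1 - w 1) - (x 1 - w 1) * (y 0 - w 0)) / D with hs
  have ht0 : 0 ≤ t := by rw [ht]; positivity
  have ht1 : t ≤ 1 := by
    rw [ht, div_le_one hpos]; linarith
  have hs0 : 0 ≤ s := by rw [hs]; positivity
  have hs1 : s ≤ 1 := by
    rw [hs, div_le_one hpos, hD]; nlinarith [h3, h2, h4]
  obtain ⟨e1, e2⟩ := seg_dist' w y t ht0 ht1
  obtain ⟨e3, e4⟩ := seg_dist' x z s hs0 hs1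
  have hoo : w + t • (y - w) = x + s • (z - x) := by
    ext c
    fin_cases c <;>
    · show w _ + t * (y _ - w _) = x _ + s * (z _ - x _)
      simp only [Fin.zero_eta, Fin.mk_one]
      rw [ht, hs, hD]
      field_simp
      ring
  have d1 : dist w x ≤ t * dist w y + s * dist x z := by
    calc dist w x ≤ dist w (w + t • (y - w)) + dist (w + t • (y - w)) x := dist_triangle _ _ _
    _ = t * dist w y + s * dist x z := by rw [e1, hoo, dist_comm _ x, e3]
  have d2 : dist y z ≤ (1 - t) * dist w y + (1 - s) * dist x z := by
    calc dist y z ≤ dist y (w + t • (y - w)) + dist (w + t • (y - w)) z := dist_triangle _ _ _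
    _ = (1 - t) * dist w y + (1 - s) * dist x z := by
        rw [dist_comm y, e2, hoo, e4]
  have d3 : dist x y ≤ s * dist x z + (1 - t) * dist w y := by
    calc dist x y ≤ dist x (w + t • (y - w)) + dist (w + t • (y - w)) y := dist_triangle _ _ _
    _ = s * dist x z + (1 - t) * dist w y := by rw [e2, hoo, e3]
  have d4 : dist w z ≤ t * dist w y + (1 - s) * dist x z := by
    calc dist w z ≤ dist w (w + t • (y - w)) + dist (w + t • (y - w)) z := dist_triangle _ _ _
    _ = t * dist w y + (1 - s) * dist x z := by rw [e1, hoo, e4]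
  constructor <;> nlinarith [dist_nonneg (x := w) (y := y), dist_nonneg (x := x) (y := z)]

/-- position of `m` along the cycle, counted counterclockwise from `i`. -/
def ckey {n : ℕ} (i m : Fin n) : ℕ :=
  if i.val ≤ m.val then m.val - i.val else m.val + n - i.val

lemma ckey_self {n : ℕ} (i : Fin n) : ckey i i = 0 := by
  unfold ckey; simp

lemma ckey_lt {n : ℕ} (i m : Fin n) : ckey i m < n := by
  have h1 := i.isLt; have h2 := m.isLt
  unfold ckey; split <;> omega

lemma ckey_inj {n : ℕ} {i x y : Fin n} (h : ckey i x = ckey i y) : x = y := by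
  have h1 := i.isLt; have h2 := x.isLt; have h3 := y.isLt
  apply Fin.ext
  unfold ckey at h; split_ifs at h <;> omega

lemma ckey_pos {n : ℕ} {i x : Fin n} (h : x ≠ i) : 0 < ckey i x := by
  rcases Nat.eq_zero_or_pos (ckey i x) with h0 | h0
  · exact absurd (ckey_inj (h0.trans (ckey_self i).symm)) h
  · exact h0

lemma cycBtw_key {n : ℕ} (i a b j : Fin n) (hab : ckey i a ≤ ckey i b) :
    cycBtw a j b ↔ ckey i a < ckey i j ∧ ckey i j < ckey i b := by
  have h1 := i.isLt; have h2 := a.isLt; have h3 := b.isLt; have h4 := j.isLt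
  unfold cycBtw
  simp only [Fin.lt_def]
  unfold ckey at *
  split_ifs at * <;> omega

lemma cycBtw_key2 {n : ℕ} (i b j : Fin n) (hb : 0 < ckey i b) :
    cycBtw b j i ↔ ckey i b < ckey i j := by
  have h1 := i.isLt; have h3 := b.isLt; have h4 := j.isLt
  unfold cycBtw
  simp only [Fin.lt_def]
  unfold ckey at *
  split_ifs at * <;> omega

lemma ccw_of_key {n : ℕ} (p : Fin n → EuclideanSpace ℝ (Fin 2))
    (hconv : ∀ i j k : Fin n, i < j → j < k → ccw (p i) (p j) (p k))
    (i x y z : Fin n) (hxy : ckey i x < ckey i y) (hyz : ckey i y < ckey i z) :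
    ccw (p x) (p y) (p z) := by
  have hrot : ∀ a b c : EuclideanSpace ℝ (Fin 2), ccw a b c → ccw b c a := by
    intro a b c h
    unfold ccw at h ⊢
    linarith [h, (by ring : (b 0 - a 0) * (c 1 - a 1) - (b 1 - a 1) * (c 0 - a 0)
      = (c 0 - b 0) * (a 1 - b 1) - (c 1 - b 1) * (a 0 - b 0))]
  have h1 := i.isLt; have h2 := x.isLt; have h3 := y.isLt; have h4 := z.isLt
  have : (x < y ∧ y < z) ∨ (y < z ∧ z < x) ∨ (z < x ∧ x < y) := by
    simp only [Fin.lt_def]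
    unfold ckey at hxy hyz
    split_ifs at hxy hyz <;> omega
  rcases this with ⟨h, h'⟩ | ⟨h, h'⟩ | ⟨h, h'⟩
  · exact hconv x y z h h'
  · exact hrot _ _ _ (hrot _ _ _ (hconv y z x h h'))
  · exact hrot _ _ _ (hconv z x y h h')

lemma mk_triple {n : ℕ} (p : Fin n → EuclideanSpace ℝ (Fin 2)) {r : ℝ} (hr : 0 < r)
    (x y z : Fin n) (h1 : r ≤ dist (p x) (p y)) (h2 : r ≤ dist (p y) (p z))
    (h3 : r ≤ dist (p x) (p z)) :
    ∃ i j k : Fin n, i ≠ j ∧ j ≠ k ∧ i ≠ k ∧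
        r ≤ dist (p i) (p j) ∧ r ≤ dist (p j) (p k) ∧ r ≤ dist (p i) (p k) := by
  refine ⟨x, y, z, ?_, ?_, ?_, h1, h2, h3⟩ <;>
    · rintro rfl; simp only [dist_self] at *; linarith

lemma aux_back {n : ℕ} (p : Fin n → EuclideanSpace ℝ (Fin 2))
    (hconv : ∀ i j k : Fin n, i < j → j < k → ccw (p i) (p j) (p k))
    {r : ℝ} (hr : 0 < r) (i a b j k : Fin n)
    (hA0 : 0 < ckey i a)
    (hAJ : ckey i a ≤ ckey i j) (hJK : ckey i j < ckey i k) (hKB : ckey i k ≤ ckey i b)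
    (haR : r ≤ dist (p i) (p a)) (hbR : r ≤ dist (p i) (p b))
    (djk : r ≤ dist (p j) (p k)) :
    ∃ x y z : Fin n, x ≠ y ∧ y ≠ z ∧ x ≠ z ∧
        r ≤ dist (p x) (p y) ∧ r ≤ dist (p y) (p z) ∧ r ≤ dist (p x) (p z) := by
  have hI : ckey i i = 0 := ckey_self i
  by_cases c1 : r ≤ dist (p i) (p j)
  · by_cases c2 : r ≤ dist (p i) (p k)
    · exact mk_triple p hr i j k c1 djk c2
    · -- d(i,k) < r ; use quad (i, j, k, b)
      push_neg at c2
      have hKBs : ckey i k < ckey i b := by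
        rcases lt_or_eq_of_le hKB with h | h
        · exact h
        · exact absurd (ckey_inj h ▸ hbR) (not_le.mpr c2)
      have q := quad_ineq' (p i) (p j) (p k) (p b)
        (ccw_of_key p hconv i i j k (by omega) hJK)
        (ccw_of_key p hconv i i j b (by omega) (by omega))
        (ccw_of_key p hconv i i k b (by omega) hKBs)
        (ccw_of_key p hconv i j k b hJK hKBs)
      have : r ≤ dist (p j) (p b) := by linarith [q.2]
      exact mk_triple p hr i j b c1 this hbR
  · -- d(i,j) < r ; use quad (i, a, j, k)
    push_neg at c1
    have hAJs : ckey i a < ckey i j := by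
      rcases lt_or_eq_of_le hAJ with h | h
      · exact h
      · exact absurd (ckey_inj h ▸ haR) (not_le.mpr c1)
    have q1 := quad_ineq' (p i) (p a) (p j) (p k)
      (ccw_of_key p hconv i i a j (by omega) hAJs)
      (ccw_of_key p hconv i i a k (by omega) (by omega))
      (ccw_of_key p hconv i i j k (by omega) hJK)
      (ccw_of_key p hconv i a j k hAJs hJK)
    have hak : r ≤ dist (p a) (p k) := by linarith [q1.1]
    by_cases c2 : r ≤ dist (p i) (p k)
    · exact mk_triple p hr i a k haR hak c2
    · push_neg at c2
      have hKBs : ckey i k < ckey i b := by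
        rcases lt_or_eq_of_le hKB with h | h
        · exact h
        · exact absurd (ckey_inj h ▸ hbR) (not_le.mpr c2)
      have q2 := quad_ineq' (p i) (p a) (p k) (p b)
        (ccw_of_key p hconv i i a k (by omega) (by omega))
        (ccw_of_key p hconv i i a b (by omega) (by omega))
        (ccw_of_key p hconv i i k b (by omega) hKBs)
        (ccw_of_key p hconv i a k b (by omega) hKBs)
      have : r ≤ dist (p a) (p b) := by linarith [q2.2]
      exact mk_triple p hr i a b haR this hbR

end Aux

/-- Let `p 0, …, p (n-1)` (`n ≥ 3`) be distinct points in convex position listed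
counterclockwise and `r > 0`.  Then `P` has three points with pairwise distances all `≥ r`
iff there is an index `i` such that, with `a` the first index counterclockwise from `i`
with `dist (p i) (p a) ≥ r` and `b` the first index clockwise from `i` with
`dist (p i) (p b) ≥ r`, the cyclic sublist `P[a, b]` contains two points at distance
`≥ r` from each other. -/
theorem stmt15 (n : ℕ) (hn : 3 ≤ n) (p : Fin n → EuclideanSpace ℝ (Fin 2))
    (hinj : Function.Injective p)
    (hconv : ∀ i j k : Fin n, i < j → j < k → ccw (p i) (p j) (p k))
    (r : ℝ) (hr : 0 < r) :
    (∃ i j k : Fin n, i ≠ j ∧ j ≠ k ∧ i ≠ k ∧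
        r ≤ dist (p i) (p j) ∧ r ≤ dist (p j) (p k) ∧ r ≤ dist (p i) (p k)) ↔
      (∃ i a b : Fin n,
        (r ≤ dist (p i) (p a) ∧ ∀ j : Fin n, cycBtw i j a → dist (p i) (p j) < r) ∧
        (r ≤ dist (p i) (p b) ∧ ∀ j : Fin n, cycBtw b j i → dist (p i) (p j) < r) ∧
        (∃ j k : Fin n, cycMem a j b ∧ cycMem a k b ∧ j ≠ k ∧ r ≤ dist (p j) (p k))) := by
  constructor
  · rintro ⟨i, j, k, hij, hjk, hik, dij, djk, dik⟩
    classical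
    set S : Finset (Fin n) := Finset.univ.filter (fun m => r ≤ dist (p i) (p m)) with hS
    have hjS : j ∈ S := by simp [hS, dij]
    have hkS : k ∈ S := by simp [hS, dik]
    obtain ⟨a, haS, hamin⟩ := S.exists_min_image (ckey i) ⟨j, hjS⟩
    obtain ⟨b, hbS, hbmax⟩ := S.exists_max_image (ckey i) ⟨j, hjS⟩
    have haR : r ≤ dist (p i) (p a) := by simpa [hS] using haS
    have hbR : r ≤ dist (p i) (p b) := by simpa [hS] using hbS
    have hmem : ∀ m : Fin n, m ∈ S → cycMem a m b := by
      intro m hmS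
      have h1 := hamin m hmS
      have h2 := hbmax m hmS
      rcases eq_or_lt_of_le h1 with h | h
      · exact Or.inl (ckey_inj h.symm)
      · rcases eq_or_lt_of_le h2 with h' | h'
        · exact Or.inr (Or.inl (ckey_inj h'))
        · exact Or.inr (Or.inr ((cycBtw_key i a b m (le_of_lt (h.trans h'))).mpr ⟨h, h'⟩))
    refine ⟨i, a, b, ⟨haR, ?_⟩, ⟨hbR, ?_⟩, j, k, hmem j hjS, hmem k hkS, hjk, djk⟩
    · intro m hm
      by_contra hcon
      push_neg at hcon
      have hmS : m ∈ S := by simp [hS, hcon]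
      have h1 := hamin m hmS
      have h2 := (cycBtw_key i i a m (by simp [ckey_self])).mp hm
      omega
    · intro m hm
      by_contra hcon
      push_neg at hcon
      have hmS : m ∈ S := by simp [hS, hcon]
      have h1 := hbmax m hmS
      have hbi : b ≠ i := by
        rintro rfl; simp only [dist_self] at hbR; linarith
      have h2 := (cycBtw_key2 i b m (ckey_pos hbi)).mp hm
      omega
  · rintro ⟨i, a, b, ⟨haR, hA⟩, ⟨hbR, hB⟩, j, k, hja, hka, hjk, djk⟩
    have hai : a ≠ i := by rintro rfl; simp only [dist_self] at haR; linarith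
    have hbi : b ≠ i := by rintro rfl; simp only [dist_self] at hbR; linarith
    have hA0 : 0 < ckey i a := ckey_pos hai
    have hB0 : 0 < ckey i b := ckey_pos hbi
    have hAB : ckey i a ≤ ckey i b := by
      by_contra h
      push_neg at h
      have : cycBtw i b a := (cycBtw_key i i a b (by simp [ckey_self])).mpr
        ⟨by simpa [ckey_self] using hB0, h⟩
      exact absurd (hA b this) (not_lt.mpr hbR)
    have hmem : ∀ m : Fin n, cycMem a m b → ckey i a ≤ ckey i m ∧ ckey i m ≤ ckey i b := by
      rintro m (rfl | rfl | hm)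
      · exact ⟨le_rfl, hAB⟩
      · exact ⟨hAB, le_rfl⟩
      · have := (cycBtw_key i a b m hAB).mp hm; omega
    obtain ⟨hJ1, hJ2⟩ := hmem j hja
    obtain ⟨hK1, hK2⟩ := hmem k hka
    have hJK : ckey i j ≠ ckey i k := fun h => hjk (ckey_inj h)
    rcases lt_or_gt_of_ne hJK with h | h
    · exact aux_back p hconv hr i a b j k hA0 hJ1 h hK2 haR hbR djk
    · exact aux_back p hconv hr i a b k j hA0 hK1 h hJ2 haR hbR (dist_comm (p j) (p k) ▸ djk)
end

section
/- (Forward direction of the size-3 feasibility criterion.) Let P = ⟨p_1,...,p_n⟩ be points in convex position listed counterclockwise, r > 0, and p_i ∈ P with indices a_i, b_i as defined (first points at distance ≥ r counterclockwise/clockwise from p_i). Suppose p_j, p_k ∈ P[a_i, b_i] satisfy |p_j p_k| ≥ r, with p_{a_i}, p_j, p_k, p_{b_i} in counterclockwise order, and suppose |p_i p_j| < r and |p_i p_k| < r. Then |p_i p_{a_i}| ≥ r, |p_i p_{b_i}| ≥ r, and |p_{a_i} p_{b_i}| ≥ r, i.e., {p_i, p_{a_i}, p_{b_i}} has minimum pairwise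 distance ≥ r. -/
lemma dot_step (e1 e2 f1 f2 g1 g2 : ℝ) (he : e1^2 + e2^2 = 1) (hf : f1^2 + f2^2 = 1)
    (hef : 0 < e1*f2 - e2*f1) (hfg : 0 < f1*g2 - f2*g1) (heg : 0 < e1*g2 - e2*g1) :
    e1*g1 + e2*g2 ≤ f1*g1 + f2*g2 := by
  have hdot : e1*f1 + e2*f2 ≤ 1 := by nlinarith [sq_nonneg (e1 - f1), sq_nonneg (e2 - f2)]
  have hid : (e1*f2 - e2*f1) * ((f1*g1 + f2*g2) - (e1*g1 + e2*g2))
      = ((e1*g2 - e2*g1) + (f1*g2 - f2*g1)) * (1 - (e1*f1 + e2*f2)) := by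
    linear_combination (f1*g2 - f2*g1) * he + (e1*g2 - e2*g1) * hf
  have h2 : 0 ≤ ((e1*g2 - e2*g1) + (f1*g2 - f2*g1)) * (1 - (e1*f1 + e2*f2)) :=
    mul_nonneg (by linarith) (by linarith)
  rw [← hid] at h2
  linarith [nonneg_of_mul_nonneg_right h2 hef]

lemma dot_step' (e1 e2 f1 f2 g1 g2 : ℝ) (hf : f1^2 + f2^2 = 1) (hg : g1^2 + g2^2 = 1)
    (hef : 0 < e1*f2 - e2*f1) (hfg : 0 < f1*g2 - f2*g1) (heg : 0 < e1*g2 - e2*g1) :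
    e1*g1 + e2*g2 ≤ e1*f1 + e2*f2 := by
  have := dot_step g1 (-g2) f1 (-f2) e1 (-e2) (by linear_combination hg)
    (by linear_combination hf) (by linarith [hfg]) (by linarith [hef]) (by linarith [heg])
  linarith [this]

lemma cross_snd_pos (a1 a2 b1 b2 : ℝ) (h : 0 < a1*b2 - a2*b1) : 0 < b1^2 + b2^2 := by
  by_contra h0
  push_neg at h0
  have hb1 : b1 = 0 := by nlinarith [sq_nonneg b1, sq_nonneg b2]
  have hb2 : b2 = 0 := by nlinarith [sq_nonneg b1, sq_nonneg b2]
  rw [hb1, hb2] at h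
  nlinarith [h]

lemma chord_lt (r nx ny : ℝ) (h1 : 0 ≤ nx) (h2 : 0 ≤ ny) (h3 : nx < r) (h4 : ny < r) :
    nx^2 + ny^2 - r^2 < nx*ny := by
  nlinarith [mul_pos (sub_pos.mpr h3) (sub_pos.mpr h4), mul_nonneg h1 (sub_pos.mpr h3).le,
    mul_nonneg h2 (sub_pos.mpr h4).le]

lemma final_bound (r nu nv d : ℝ) (hr : 0 ≤ r) (h1 : r ≤ nu) (h2 : r ≤ nv)
    (hd : 2*d < nu*nv) : r^2 ≤ nu^2 + nv^2 - 2*d := by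
  nlinarith [sq_nonneg (nu - nv), mul_le_mul h1 h2 hr (hr.trans h1)]

lemma key (r u1 u2 x1 x2 y1 y2 v1 v2 : ℝ) (hr : 0 < r)
    (cux : 0 < u1*x2 - u2*x1) (cxy : 0 < x1*y2 - x2*y1) (cyv : 0 < y1*v2 - y2*v1)
    (cuy : 0 < u1*y2 - u2*y1) (cxv : 0 < x1*v2 - x2*v1) (cuv : 0 < u1*v2 - u2*v1)
    (hu : r^2 ≤ u1^2 + u2^2) (hv : r^2 ≤ v1^2 + v2^2)
    (hx : x1^2 + x2^2 < r^2) (hy : y1^2 + y2^2 < r^2)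
    (hxy : r^2 ≤ (x1 - y1)^2 + (x2 - y2)^2) :
    r^2 ≤ (u1 - v1)^2 + (u2 - v2)^2 := by
  have hr2 : 0 < r^2 := by positivity
  have hupos : 0 < u1^2 + u2^2 := lt_of_lt_of_le hr2 hu
  have hvpos : 0 < v1^2 + v2^2 := lt_of_lt_of_le hr2 hv
  have hxpos : 0 < x1^2 + x2^2 := cross_snd_pos u1 u2 x1 x2 cux
  have hypos : 0 < y1^2 + y2^2 := cross_snd_pos u1 u2 y1 y2 cuy
  set nu := Real.sqrt (u1^2 + u2^2) with hnudef
  set nv := Real.sqrt (v1^2 + v2^2) with hnvdef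
  set nx := Real.sqrt (x1^2 + x2^2) with hnxdef
  set ny := Real.sqrt (y1^2 + y2^2) with hnydef
  have hnu : nu^2 = u1^2 + u2^2 := Real.sq_sqrt hupos.le
  have hnv : nv^2 = v1^2 + v2^2 := Real.sq_sqrt hvpos.le
  have hnx : nx^2 = x1^2 + x2^2 := Real.sq_sqrt hxpos.le
  have hny : ny^2 = y1^2 + y2^2 := Real.sq_sqrt hypos.le
  have hnupos : 0 < nu := Real.sqrt_pos.mpr hupos
  have hnvpos : 0 < nv := Real.sqrt_pos.mpr hvpos
  have hnxpos : 0 < nx := Real.sqrt_pos.mpr hxpos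
  have hnypos : 0 < ny := Real.sqrt_pos.mpr hypos
  have hnur : r ≤ nu := (Real.le_sqrt hr.le hupos.le).mpr hu
  have hnvr : r ≤ nv := (Real.le_sqrt hr.le hvpos.le).mpr hv
  have hnxr : nx < r := (Real.sqrt_lt' hr).mpr hx
  have hnyr : ny < r := (Real.sqrt_lt' hr).mpr hy
  -- unit vectors
  have ueu : (u1/nu)^2 + (u2/nu)^2 = 1 := by field_simp; linarith [hnu]
  have uev : (v1/nv)^2 + (v2/nv)^2 = 1 := by field_simp; linarith [hnv]
  have uex : (x1/nx)^2 + (x2/nx)^2 = 1 := by field_simp; linarith [hnx]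
  have uey : (y1/ny)^2 + (y2/ny)^2 = 1 := by field_simp; linarith [hny]
  -- normalized crosses
  have ncross : ∀ a1 a2 b1 b2 na nb : ℝ, 0 < na → 0 < nb → 0 < a1*b2 - a2*b1 →
      0 < (a1/na)*(b2/nb) - (a2/na)*(b1/nb) := by
    intro a1 a2 b1 b2 na nb hna hnb hc
    have h : (a1/na)*(b2/nb) - (a2/na)*(b1/nb) = (a1*b2 - a2*b1)/(na*nb) := by
      field_simp
    rw [h]; exact div_pos hc (mul_pos hna hnb)
  have s1 : (u1/nu)*(v1/nv) + (u2/nu)*(v2/nv) ≤ (x1/nx)*(v1/nv) + (x2/nx)*(v2/nv) :=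
    dot_step (u1/nu) (u2/nu) (x1/nx) (x2/nx) (v1/nv) (v2/nv) ueu uex
      (ncross _ _ _ _ _ _ hnupos hnxpos cux)
      (ncross _ _ _ _ _ _ hnxpos hnvpos cxv) (ncross _ _ _ _ _ _ hnupos hnvpos cuv)
  have s2 : (x1/nx)*(v1/nv) + (x2/nx)*(v2/nv) ≤ (x1/nx)*(y1/ny) + (x2/nx)*(y2/ny) :=
    dot_step' (x1/nx) (x2/nx) (y1/ny) (y2/ny) (v1/nv) (v2/nv) uey uev
      (ncross _ _ _ _ _ _ hnxpos hnypos cxy)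
      (ncross _ _ _ _ _ _ hnypos hnvpos cyv) (ncross _ _ _ _ _ _ hnxpos hnvpos cxv)
  -- the small-angle chord bound for x, y
  have hexp : (x1 - y1)^2 + (x2 - y2)^2
      = (x1^2 + x2^2) + (y1^2 + y2^2) - 2*(x1*y1 + x2*y2) := by ring
  have hdotxy : 2*(x1*y1 + x2*y2) ≤ nx^2 + ny^2 - r^2 := by
    rw [hnx, hny]; linarith [hxy, hexp]
  have hxyq : nx^2 + ny^2 - r^2 < nx*ny := chord_lt r nx ny hnxpos.le hnypos.le hnxr hnyr
  have s3 : (x1/nx)*(y1/ny) + (x2/nx)*(y2/ny) < 1/2 := by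
    rw [div_mul_div_comm, div_mul_div_comm, ← add_div, div_lt_iff₀ (by positivity)]
    linarith
  have huvd : 2*(u1*v1 + u2*v2) < nu*nv := by
    have h4 : (u1/nu)*(v1/nv) + (u2/nu)*(v2/nv) < 1/2 := lt_of_le_of_lt (le_trans s1 s2) s3
    rw [div_mul_div_comm, div_mul_div_comm, ← add_div, div_lt_iff₀ (by positivity)] at h4
    linarith
  have hfin := final_bound r nu nv (u1*v1 + u2*v2) hr.le hnur hnvr huvd
  have expand : (u1 - v1)^2 + (u2 - v2)^2 = nu^2 + nv^2 - 2*(u1*v1 + u2*v2) := by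
    rw [hnu, hnv]; ring
  rw [expand]; linarith

lemma ccw_rot {a b c : EuclideanSpace ℝ (Fin 2)} (h : ccw a b c) : ccw c a b := by
  unfold ccw at *
  have he : (a 0 - c 0) * (b 1 - c 1) - (a 1 - c 1) * (b 0 - c 0)
      = (b 0 - a 0) * (c 1 - a 1) - (b 1 - a 1) * (c 0 - a 0) := by ring
  rw [he]; exact h

lemma cycMem_self {n : ℕ} {x y : Fin n} (h : cycMem x y x) : y = x := by
  rcases h with h | h | h
  · exact h
  · exact h
  · exfalso
    simp only [cycBtw, Fin.lt_def] at h
    omega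

/-- Forward direction of the size-3 feasibility criterion, case (2).  Let
`p 0, …, p (n-1)` be distinct points in convex position counterclockwise, `r > 0`, and
`i` an index with `a` the first index counterclockwise from `i` at distance `≥ r` from
`p i`, and `b` the first index clockwise from `i` at distance `≥ r`.  Suppose
`p j, p k ∈ P[a, b]` satisfy `dist (p j) (p k) ≥ r`, with `p a, p j, p k, p b` in
counterclockwise order, and `dist (p i) (p j) < r`, `dist (p i) (p k) < r`.  Then
`{p i, p a, p b}` has minimum pairwise distance `≥ r`. -/
theorem stmt16 (n : ℕ) (p : Fin n → EuclideanSpace ℝ (Fin 2))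
    (hinj : Function.Injective p)
    (hconv : ∀ i j k : Fin n, i < j → j < k → ccw (p i) (p j) (p k))
    (r : ℝ) (hr : 0 < r) (i a b j k : Fin n)
    (hada : r ≤ dist (p i) (p a)) (hafirst : ∀ l : Fin n, cycBtw i l a → dist (p i) (p l) < r)
    (hbdb : r ≤ dist (p i) (p b)) (hbfirst : ∀ l : Fin n, cycBtw b l i → dist (p i) (p l) < r)
    (hj : cycMem a j b) (hk : cycMem a k b)
    (horder1 : cycMem a j k) (horder2 : cycMem j k b)
    (hjk : r ≤ dist (p j) (p k))
    (hij : dist (p i) (p j) < r) (hik : dist (p i) (p k) < r) :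
    r ≤ dist (p i) (p a) ∧ r ≤ dist (p i) (p b) ∧ r ≤ dist (p a) (p b) := by
  -- distinctness of indices
  have hia : i ≠ a := by rintro rfl; rw [dist_self] at hada; linarith
  have hib : i ≠ b := by rintro rfl; rw [dist_self] at hbdb; linarith
  have hijne : i ≠ j := by rintro rfl; linarith
  have hikne : i ≠ k := by rintro rfl; rw [dist_comm] at hjk; linarith
  have hjkne : j ≠ k := by rintro rfl; rw [dist_self] at hjk; linarith
  have hja : j ≠ a := by rintro rfl; linarith
  have hkb : k ≠ b := by rintro rfl; linarith
  have hka : k ≠ a := by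
    rintro rfl
    exact hjkne (cycMem_self horder1)
  have hjb : j ≠ b := by
    rintro rfl
    exact hjkne (cycMem_self horder2).symm
  have hab : a ≠ b := by
    rintro rfl
    exact hja (cycMem_self hj)
  -- strict cyclic betweenness
  have cajb : cycBtw a j b := by
    rcases hj with h | h | h
    exacts [absurd h hja, absurd h hjb, h]
  have cakb : cycBtw a k b := by
    rcases hk with h | h | h
    exacts [absurd h hka, absurd h hkb, h]
  have cajk : cycBtw a j k := by
    rcases horder1 with h | h | h
    exacts [absurd h hja, absurd h hjkne, h]
  have cjkb : cycBtw j k b := by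
    rcases horder2 with h | h | h
    exacts [absurd h (Ne.symm hjkne), absurd h hkb, h]
  -- i lies on the arc from b to a
  have cbia : cycBtw b i a := by
    have htri : cycBtw b i a ∨ cycBtw i b a := by
      have h1 : i.val ≠ a.val := fun h => hia (Fin.ext h)
      have h2 : i.val ≠ b.val := fun h => hib (Fin.ext h)
      have h3 : a.val ≠ b.val := fun h => hab (Fin.ext h)
      simp only [cycBtw, Fin.lt_def]
      omega
    rcases htri with h | h
    · exact h
    · exact absurd (hafirst b h) (not_lt.mpr hbdb)
  -- all needed cyclic triples with i first
  have H : cycBtw i a j ∧ cycBtw i j k ∧ cycBtw i k b ∧ cycBtw i a b ∧ cycBtw i a k ∧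
      cycBtw i j b := by
    have h1 : i.val ≠ j.val := fun h => hijne (Fin.ext h)
    have h2 : i.val ≠ k.val := fun h => hikne (Fin.ext h)
    simp only [cycBtw, Fin.lt_def] at cajb cakb cajk cjkb cbia ⊢
    omega
  obtain ⟨c1, c2, c3, c4, c5, c6⟩ := H
  -- convert cyclic triples to ccw orientations
  have cyc3 : ∀ x y z : Fin n, cycBtw x y z → ccw (p x) (p y) (p z) := by
    intro x y z h
    rcases h with ⟨h1, h2⟩ | ⟨h1, h2⟩ | ⟨h1, h2⟩
    · exact hconv x y z h1 h2
    · exact ccw_rot (hconv y z x h1 h2)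
    · exact ccw_rot (ccw_rot (hconv z x y h1 h2))
  have wiaj := cyc3 _ _ _ c1
  have wijk := cyc3 _ _ _ c2
  have wikb := cyc3 _ _ _ c3
  have wiab := cyc3 _ _ _ c4
  have wiak := cyc3 _ _ _ c5
  have wijb := cyc3 _ _ _ c6
  unfold ccw at wiaj wijk wikb wiab wiak wijb
  -- distances in coordinates
  have dist_eq : ∀ q q' : EuclideanSpace ℝ (Fin 2),
      dist q q' = Real.sqrt ((q 0 - q' 0)^2 + (q 1 - q' 1)^2) := by
    intro q q'
    rw [EuclideanSpace.dist_eq]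
    simp [Fin.sum_univ_two, Real.dist_eq, sq_abs]
  have hle : ∀ q q' : EuclideanSpace ℝ (Fin 2),
      r ≤ dist q q' ↔ r^2 ≤ (q 0 - q' 0)^2 + (q 1 - q' 1)^2 := by
    intro q q'
    rw [dist_eq]
    exact Real.le_sqrt hr.le (by positivity)
  have hlt : ∀ q q' : EuclideanSpace ℝ (Fin 2),
      dist q q' < r ↔ (q 0 - q' 0)^2 + (q 1 - q' 1)^2 < r^2 := by
    intro q q'
    rw [dist_eq]
    constructor
    · intro h; exact (Real.sqrt_lt' hr).mp h
    · intro h; exact (Real.sqrt_lt' hr).mpr h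
  refine ⟨hada, hbdb, ?_⟩
  rw [hle]
  have hu := (hle _ _).mp hada
  have hv := (hle _ _).mp hbdb
  have hx := (hlt _ _).mp hij
  have hy := (hlt _ _).mp hik
  have hxy := (hle _ _).mp hjk
  have hmain := key r (p a 0 - p i 0) (p a 1 - p i 1) (p j 0 - p i 0) (p j 1 - p i 1)
    (p k 0 - p i 0) (p k 1 - p i 1) (p b 0 - p i 0) (p b 1 - p i 1) hr
    (by linarith [wiaj]) (by linarith [wijk]) (by linarith [wikb])
    (by linarith [wiak]) (by linarith [wijb]) (by linarith [wiab])
    (by linarith [hu]) (by linarith [hv]) (by linarith [hx]) (by linarith [hy])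
    (by have e : (p j 0 - p i 0 - (p k 0 - p i 0))^2 + (p j 1 - p i 1 - (p k 1 - p i 1))^2
          = (p j 0 - p k 0)^2 + (p j 1 - p k 1)^2 := by ring
        rw [e]; exact hxy)
  have e2 : (p a 0 - p i 0 - (p b 0 - p i 0))^2 + (p a 1 - p i 1 - (p b 1 - p i 1))^2
      = (p a 0 - p b 0)^2 + (p a 1 - p b 1)^2 := by ring
  rw [e2] at hmain
  exact hmain
end

section
/- Let Γ = {A_t × B_t} be a collection of bicliques on a finite planar point set P satisfying: (i) every pair (a,b) ∈ A_t × B_t has |ab| > 1; (ii) every pair a, b ∈ P with |ab| > 1 lies in exactly one biclique; (iii) the sets A_t form a tree T in which the children of every internal node partition that node's set. Then three points a, b, c ∈ P have all pairwise distances > 1 if and only if there exists a biclique (A_t, B_t) containing some pair of them, say (a, b) ∈ A_t × B_t, and an ancestor A_{t'} of A_t in T (possibly A_t itself) such that c ∈ B_{t'} and |bc| > 1. -/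
/-- Tree-structured biclique partition criterion for size-3 independent sets of the
unit-disk graph.  The bicliques are `A t × B t` for `t : Fin m`; the tree on the index set
is given by a `parent` function with root `root` (every node reaches the root by iterating
`parent`), and the children of every internal node partition that node's set.  Ancestor is
reflexive (`parent^[0] t = t`).  Then three points `a, b, c ∈ P` have all pairwise distances
`> 1` iff some biclique `(A t, B t)` contains a pair of them — say `(x, y) ∈ A t × B t`
where `{x, y, z} = {a, b, c}` — and `A t` has an ancestor `A t'` with `z ∈ B t'` and
`dist y z > 1`. -/
theorem stmt17 (P : Set (EuclideanSpace ℝ (Fin 2))) (hP : P.Finite)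
    (m : ℕ) (A B : Fin m → Set (EuclideanSpace ℝ (Fin 2)))
    (hAP : ∀ t, A t ⊆ P) (hBP : ∀ t, B t ⊆ P)
    -- (i) every pair in a biclique is at distance > 1:
    (h1 : ∀ t, ∀ x ∈ A t, ∀ y ∈ B t, dist x y > 1)
    -- (ii) every pair at distance > 1 lies in exactly one biclique:
    (h2 : ∀ x ∈ P, ∀ y ∈ P, dist x y > 1 → ∃! t : Fin m, x ∈ A t ∧ y ∈ B t)
    -- (iii) the sets A t form a rooted tree in which the children of every internal node
    -- partition that node's set:
    (parent : Fin m → Fin m) (root : Fin m) (hroot : parent root = root)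
    (hreach : ∀ t, ∃ n : ℕ, parent^[n] t = root)
    (hcover : ∀ t, (∃ s, s ≠ t ∧ parent s = t) →
      A t = ⋃ s ∈ {s : Fin m | s ≠ t ∧ parent s = t}, A s)
    (hdisj : ∀ t s s' : Fin m, s ≠ t → s' ≠ t → parent s = t → parent s' = t → s ≠ s' →
      A s ∩ A s' = ∅)
    (a b c : EuclideanSpace ℝ (Fin 2)) (ha : a ∈ P) (hb : b ∈ P) (hc : c ∈ P) :
    (dist a b > 1 ∧ dist b c > 1 ∧ dist a c > 1) ↔
      ∃ t t' : Fin m, (∃ n : ℕ, parent^[n] t = t') ∧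
        ∃ x y z : EuclideanSpace ℝ (Fin 2),
          ({x, y, z} : Set (EuclideanSpace ℝ (Fin 2))) = {a, b, c} ∧
          x ∈ A t ∧ y ∈ B t ∧ z ∈ B t' ∧ dist y z > 1 := by
  classical
  -- monotonicity: A s ⊆ A (parent s)
  have hmono : ∀ s, A s ⊆ A (parent s) := by
    intro s
    by_cases hs : parent s = s
    · rw [hs]
    · intro x hx
      rw [hcover (parent s) ⟨s, fun h => hs h.symm, rfl⟩]
      exact Set.mem_biUnion (show s ∈ {u : Fin m | u ≠ parent s ∧ parent u = parent s} from
        ⟨fun h => hs h.symm, rfl⟩) hx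
  have hmono' : ∀ n s, A s ⊆ A (parent^[n] s) := by
    intro n
    induction n with
    | zero => intro s; simp
    | succ n ih =>
      intro s
      rw [Function.iterate_succ_apply]
      exact (hmono s).trans (ih (parent s))
  -- depth function
  set d : Fin m → ℕ := fun t => Nat.find (hreach t) with hd
  have hdspec : ∀ t, parent^[d t] t = root := fun t => Nat.find_spec (hreach t)
  have hdzero : ∀ t, d t = 0 → t = root := by
    intro t h
    have := hdspec t
    rw [h] at this
    simpa using this
  have hparent_ne : ∀ t, t ≠ root → t ≠ parent t := by
    intro t ht hpt'
    have hpt : parent t = t := hpt'.symm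
    obtain ⟨n, hn⟩ := hreach t
    have : parent^[n] t = t := by
      induction n with
      | zero => rfl
      | succ n ih => rw [Function.iterate_succ_apply, hpt, ih (by rw [← hn, Function.iterate_succ_apply, hpt])]
    exact ht (this ▸ hn)
  have hdparent : ∀ t, t ≠ root → d (parent t) + 1 = d t := by
    intro t ht
    have h1' : d t ≠ 0 := fun h => ht (hdzero t h)
    have hle : d (parent t) ≤ d t - 1 := by
      apply Nat.find_le
      have := hdspec t
      rwa [← Nat.succ_pred_eq_of_pos (Nat.pos_of_ne_zero h1'), Function.iterate_succ_apply] at this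
    have hge : d t ≤ d (parent t) + 1 := by
      apply Nat.find_le
      rw [Function.iterate_succ_apply]
      exact hdspec (parent t)
    omega
  -- same depth + common point ⇒ equal
  have hsame : ∀ n : ℕ, ∀ p : EuclideanSpace ℝ (Fin 2), ∀ t s : Fin m,
      p ∈ A t → p ∈ A s → d t = n → d s = n → t = s := by
    intro n
    induction n with
    | zero => intro p t s _ _ hdt hds; rw [hdzero t hdt, hdzero s hds]
    | succ n ih =>
      intro p t s hpt hps hdt hds
      have hd0 : d root = 0 := Nat.find_eq_zero (hreach root) |>.mpr rfl
      have htr : t ≠ root := by intro h; rw [h] at hdt; omega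
      have hsr : s ≠ root := by intro h; rw [h] at hds; omega
      have hps' : d (parent s) = n := by have := hdparent s hsr; omega
      have hpt' : d (parent t) = n := by have := hdparent t htr; omega
      have heq : parent t = parent s :=
        ih p (parent t) (parent s) (hmono t hpt) (hmono s hps) hpt' hps'
      by_contra hne
      have := hdisj (parent t) t s (hparent_ne t htr) (by rw [heq]; exact hparent_ne s hsr) rfl heq.symm hne
      exact absurd (Set.mem_inter hpt hps) (by rw [this]; exact not_false)
  -- ancestor lemma
  have hanc : ∀ p : EuclideanSpace ℝ (Fin 2), ∀ t s : Fin m, p ∈ A t → p ∈ A s →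
      (∃ n, parent^[n] t = s) ∨ (∃ n, parent^[n] s = t) := by
    have key : ∀ p : EuclideanSpace ℝ (Fin 2), ∀ t s : Fin m, p ∈ A t → p ∈ A s →
        d s ≤ d t → parent^[d t - d s] t = s := by
      intro p t s hpt hps hle
      have hdit : ∀ k, k ≤ d t → d (parent^[k] t) = d t - k := by
        intro k
        induction k with
        | zero => simp
        | succ k ihk =>
          intro hk
          have h1' := ihk (le_of_lt (Nat.lt_of_succ_le hk))
          have hne : parent^[k] t ≠ root := by
            intro h
            have : d (parent^[k] t) = 0 := by
              rw [h]; exact Nat.find_eq_zero (hreach root) |>.mpr rfl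
            omega
          have := hdparent (parent^[k] t) hne
          rw [Function.iterate_succ_apply']
          omega
      have hmem : p ∈ A (parent^[d t - d s] t) := hmono' _ t hpt
      have hdd : d (parent^[d t - d s] t) = d s := by
        rw [hdit _ (Nat.sub_le _ _)]; omega
      exact hsame (d s) p _ s hmem hps hdd rfl
    intro p t s hpt hps
    rcases le_total (d s) (d t) with h | h
    · exact Or.inl ⟨d t - d s, key p t s hpt hps h⟩
    · exact Or.inr ⟨d s - d t, key p s t hps hpt h⟩
  constructor
  · rintro ⟨hab, hbc, hac⟩
    obtain ⟨t, ⟨hat, hbt⟩, -⟩ := h2 a ha b hb hab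
    obtain ⟨t'', ⟨hat'', hct''⟩, -⟩ := h2 a ha c hc hac
    rcases hanc a t t'' hat hat'' with ⟨n, hn⟩ | ⟨n, hn⟩
    · exact ⟨t, t'', ⟨n, hn⟩, a, b, c, rfl, hat, hbt, hct'', hbc⟩
    · refine ⟨t'', t, ⟨n, hn⟩, a, c, b, ?_, hat'', hct'', hbt, by rwa [dist_comm]⟩
      ext u; simp; tauto
  · rintro ⟨t, t', ⟨n, hn⟩, x, y, z, hset, hxA, hyB, hzB, hyz⟩
    have hxy : dist x y > 1 := h1 t x hxA y hyB
    have hxz : dist x z > 1 := h1 t' x (hn ▸ hmono' n t hxA) z hzB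
    have hxy' : x ≠ y := by intro h; rw [h] at hxy; simp at hxy; linarith
    have hyz' : y ≠ z := by intro h; rw [h] at hyz; simp at hyz; linarith
    have hxz' : x ≠ z := by intro h; rw [h] at hxz; simp at hxz; linarith
    -- any two distinct elements of {x,y,z} are far apart
    have claim : ∀ u ∈ ({x, y, z} : Set (EuclideanSpace ℝ (Fin 2))),
        ∀ v ∈ ({x, y, z} : Set (EuclideanSpace ℝ (Fin 2))), u ≠ v → dist u v > 1 := by
      intro u hu v hv huv
      simp only [Set.mem_insert_iff, Set.mem_singleton_iff] at hu hv
      rcases hu with rfl | rfl | rfl <;> rcases hv with rfl | rfl | rfl <;>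
        first
          | exact absurd rfl huv
          | assumption
          | (rw [dist_comm]; assumption)
    have hmem : ∀ u ∈ ({a, b, c} : Set (EuclideanSpace ℝ (Fin 2))),
        u ∈ ({x, y, z} : Set (EuclideanSpace ℝ (Fin 2))) := by
      intro u hu; rw [hset]; exact hu
    have hma : a ∈ ({x, y, z} : Set _) := hmem a (by simp)
    have hmb : b ∈ ({x, y, z} : Set _) := hmem b (by simp)
    have hmc : c ∈ ({x, y, z} : Set _) := hmem c (by simp)
    -- a, b, c are pairwise distinct
    have h3 : ({x, y, z} : Set (EuclideanSpace ℝ (Fin 2))).ncard = 3 := by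
      rw [Set.ncard_insert_of_notMem (by simp [hxy', hxz']),
        Set.ncard_insert_of_notMem (by simp [hyz']), Set.ncard_singleton]
    rw [hset] at h3
    have hle2 : ∀ u v : EuclideanSpace ℝ (Fin 2), ({u, v} : Set _).ncard ≤ 2 := by
      intro u v
      exact (Set.ncard_insert_le u {v}).trans (by simp)
    have hdistinct : a ≠ b ∧ b ≠ c ∧ a ≠ c := by
      refine ⟨?_, ?_, ?_⟩ <;> intro h
      · rw [h, Set.insert_idem] at h3
        have := hle2 b c; omega
      · rw [h, show ({a, c, c} : Set (EuclideanSpace ℝ (Fin 2))) = {a, c} by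
          ext u; simp] at h3
        have := hle2 a c; omega
      · rw [h, show ({c, b, c} : Set (EuclideanSpace ℝ (Fin 2))) = {c, b} by
          ext u; simp; tauto] at h3
        have := hle2 c b; omega
    exact ⟨claim a hma b hmb hdistinct.1, claim b hmb c hmc hdistinct.2.1,
      claim a hma c hmc hdistinct.2.2⟩
end
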